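/- arXiv:1512.07136 — 5 statements merged into one kernel-verified Lean document; each statement's English description precedes it below -/
import Mathlib

section
/- Let G = (V, E) be a disconnected graph on the ordered variable set V, with V = U ⊔ W, E = EU ⊔ EW, where EU, EW are the edges joining vertices within U and within W respectively, GU = (U, EU), GW = (W, EW). Let f = Σ_i u_i w_i be a polynomial with deg f ≤ |E|, where each u_i depends only on the variables in U, each w_i only on the variables in W, and deg u_i + deg w_i ≤ deg f. Then DS_G(f) = binom(|V|, |U|) · Σ_i DS_{GU}(u_i) · DS_{GW}(w_i), where any summand with deg u_i < |EU| or deg w_i < |EW| is zero. -/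
/-!
Let `Δ = ∏_{i<j} (x_i - x_j)`. Multiplying `DS_{G_U}(g)` by `Δ` gives the alternant, over the
permutations of `U`, of `g · ∏_{non-edges} (x_i - x_j)`. Each of the pairwise non-associate
prime factors `x_i - x_j` of `Δ` divides this alternant (by antisymmetry if `i, j ∈ U`;
otherwise every permutation of `U` fixes an endpoint and the matching non-edge factor survives),
so `Δ` divides it, and comparing degrees shows that `DS_{G_U}(g)` is a constant if
`deg g ≤ |E_U|` and `0` if `deg g < |E_U|`.

For the disconnected graph, group the permutations of `V` by the image of `U`. A permutation
stabilising `U` is a product of a permutation of `U` and one of `W`, which splits each summand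
of `DS_G(u_i w_i)` as a summand of `DS_{G_U}(u_i)` times one of `DS_{G_W}(w_i)`; so the
stabiliser contributes `Σ_i DS_{G_U}(u_i) DS_{G_W}(w_i)`, a constant by the degree bound.
Relabelling the variables carries one fibre onto another and fixes constants, so each of the
`binom(|V|, |U|)` fibres contributes the same.
-/

open MvPolynomial

/-- Partial divided symmetrization of a polynomial `f` over the graph on the variables
`x_0 < x_1 < ... < x_{m-1}` whose (ordered) edges form the finset `E`:
`DS_G(f) = Σ_π (f ∘ π) / Π_{(x,y) ∈ E} (x_π − y_π)`,
the sum being over all `m!` permutations of the variables. -/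
noncomputable def DS {K : Type*} [Field K] {m : ℕ} (E : Finset (Fin m × Fin m))
    (f : MvPolynomial (Fin m) K) : FractionRing (MvPolynomial (Fin m) K) :=
  ∑ π : Equiv.Perm (Fin m),
    algebraMap (MvPolynomial (Fin m) K) (FractionRing (MvPolynomial (Fin m) K))
        (rename (⇑π) f) /
      algebraMap (MvPolynomial (Fin m) K) (FractionRing (MvPolynomial (Fin m) K))
        (rename (⇑π) (∏ e ∈ E, (X e.1 - X e.2)))
/-- Divided symmetrization of `f` over the subgraph with edge finset `E` on the subset
`U` of the variables: the symmetrization sum is taken only over the permutations of the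
variables in `U` (i.e. permutations fixing every variable outside `U`). -/
noncomputable def DSOn {K : Type*} [Field K] {m : ℕ} (U : Finset (Fin m))
    (E : Finset (Fin m × Fin m)) (f : MvPolynomial (Fin m) K) :
    FractionRing (MvPolynomial (Fin m) K) :=
  ∑ π ∈ Finset.univ.filter fun π : Equiv.Perm (Fin m) => ∀ x ∉ U, π x = x,
    algebraMap (MvPolynomial (Fin m) K) (FractionRing (MvPolynomial (Fin m) K))
        (rename (⇑π) f) /
      algebraMap (MvPolynomial (Fin m) K) (FractionRing (MvPolynomial (Fin m) K))
        (rename (⇑π) (∏ e ∈ E, (X e.1 - X e.2)))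

open Finset Equiv

namespace MvPolynomial

variable {σ R : Type*}

theorem rename_congr_vars {τ : Type*} [CommSemiring R] {f g : σ → τ} {p : MvPolynomial σ R}
    (h : ∀ x ∈ p.vars, f x = g x) : rename f p = rename g p :=
  hom_congr_vars (f₁ := (rename f).toRingHom) (f₂ := (rename g).toRingHom) (by ext; simp)
    (fun i hi _ => by simp [h i hi]) rfl

theorem dvd_sub_aeval_of_forall_dvd [CommRing R] {d : MvPolynomial σ R}
    {v : σ → MvPolynomial σ R} (hv : ∀ i, d ∣ X i - v i) (p : MvPolynomial σ R) :
    d ∣ p - aeval v p := by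
  induction p using MvPolynomial.induction_on with
  | C c => simp
  | add p q hp hq => simpa [add_sub_add_comm] using dvd_add hp hq
  | mul_X p i hp =>
    have h : p * X i - aeval v (p * X i) = (p - aeval v p) * X i + aeval v p * (X i - v i) := by
      rw [map_mul, aeval_X]; ring
    rw [h]
    exact dvd_add (hp.mul_right _) ((hv i).mul_left _)

theorem X_sub_X_dvd_sub_rename_swap [CommRing R] [DecidableEq σ] (a b : σ)
    (p : MvPolynomial σ R) : X a - X b ∣ p - rename (swap a b) p := by
  rw [rename_eq_aeval]
  refine dvd_sub_aeval_of_forall_dvd (fun i => ?_) p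
  rcases eq_or_ne i a with rfl | hia
  · simp
  rcases eq_or_ne i b with rfl | hib
  · simp [dvd_sub_comm]
  · simp [swap_apply_of_ne_of_ne hia hib]

theorem totalDegree_X_sub_X [CommRing R] [Nontrivial R] {a b : σ} (hab : a ≠ b) :
    (X a - X b : MvPolynomial σ R).totalDegree = 1 := by
  classical
  refine le_antisymm ((totalDegree_sub _ _).trans (by simp)) ?_
  have h : coeff (Finsupp.single a 1) (X a - X b : MvPolynomial σ R) ≠ 0 := by
    simp [coeff_X, Finsupp.single_left_inj, hab.symm]
  simpa using le_totalDegree (mem_support_iff.mpr h)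

theorem prime_X_sub_X [CommRing R] [IsDomain R] [UniqueFactorizationMonoid R] {a b : σ}
    (hab : a ≠ b) : Prime (X a - X b : MvPolynomial σ R) := by
  classical
  refine (irreducible_of_totalDegree_eq_one (totalDegree_X_sub_X hab) fun x hx => ?_).prime
  have h := hx (Finsupp.single a 1)
  simp [coeff_X, Finsupp.single_left_inj, hab.symm] at h
  exact isUnit_of_dvd_one h

theorem X_sub_X_not_dvd [CommRing R] [Nontrivial R] {a b c d : σ} (hca : c ≠ a) (hcb : c ≠ b)
    (hcd : c ≠ d) : ¬ (X a - X b : MvPolynomial σ R) ∣ X c - X d := by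
  classical
  intro h
  have h' := map_dvd (eval (Pi.single c (1 : R))) h
  simp [hca.symm, hcb.symm, hcd.symm] at h'

theorem exists_eq_mul_C_of_dvd_of_totalDegree_le [CommRing R] [IsDomain R]
    {W N : MvPolynomial σ R} (hdvd : W ∣ N) (hdeg : N.totalDegree ≤ W.totalDegree) :
    ∃ c : R, N = W * C c := by
  obtain ⟨q, rfl⟩ := hdvd
  rcases eq_or_ne W 0 with rfl | hW
  · exact ⟨0, by simp⟩
  rcases eq_or_ne q 0 with rfl | hq
  · exact ⟨0, by simp⟩
  rw [totalDegree_mul_of_isDomain hW hq] at hdeg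
  exact ⟨coeff 0 q, by rw [← totalDegree_eq_zero_iff_eq_C.mp (by omega)]⟩

theorem eq_zero_of_dvd_of_totalDegree_lt [CommRing R] [IsDomain R] {W N : MvPolynomial σ R}
    (hdvd : W ∣ N) (hdeg : N.totalDegree < W.totalDegree) : N = 0 := by
  obtain ⟨q, rfl⟩ := hdvd
  by_contra hN
  rw [totalDegree_mul_of_isDomain (left_ne_zero_of_mul hN) (right_ne_zero_of_mul hN)] at hdeg
  omega

end MvPolynomial

theorem Finset.prod_dvd_of_forall_prime_dvd {ι M : Type*} [CommMonoidWithZero M]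
    {t : Finset ι} {g : ι → M} {n : M} (hp : ∀ i ∈ t, Prime (g i))
    (hnd : (t : Set ι).Pairwise fun i j => ¬ g i ∣ g j) (hdvd : ∀ i ∈ t, g i ∣ n) :
    ∏ i ∈ t, g i ∣ n := by
  classical
  induction t using Finset.induction_on generalizing n with
  | empty => simp
  | insert a t ha ih =>
    obtain ⟨n', rfl⟩ := hdvd a (mem_insert_self a t)
    rw [prod_insert ha]
    refine mul_dvd_mul_left _ (ih (fun i hi => hp i (mem_insert_of_mem hi))
      (hnd.mono (by simp)) fun i hi => ?_)
    refine ((hp i (mem_insert_of_mem hi)).dvd_or_dvd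
      (hdvd i (mem_insert_of_mem hi))).resolve_left ?_
    exact hnd (by simp [hi]) (by simp) (by rintro rfl; exact ha hi)

namespace Equiv.Perm

variable {α : Type*} [Fintype α] [DecidableEq α]

def permsOn (U : Finset α) : Finset (Perm α) := univ.filter fun π => ∀ x ∉ U, π x = x

def setStabilizer (s : Finset α) : Finset (Perm α) := univ.filter fun π => s.image π = s

theorem mem_permsOn {U : Finset α} {π : Perm α} : π ∈ permsOn U ↔ ∀ x ∉ U, π x = x := by
  simp [permsOn]

theorem mul_mem_permsOn_iff {U : Finset α} {τ π : Perm α} (hτ : τ ∈ permsOn U) :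
    τ * π ∈ permsOn U ↔ π ∈ permsOn U := by
  simp only [mem_permsOn] at hτ ⊢
  refine forall₂_congr fun x hx => ?_
  rw [mul_apply, ← hτ x hx, τ.apply_eq_iff_eq, hτ x hx]

theorem inv_apply_of_mem_permsOn {U : Finset α} {π : Perm α} (hπ : π ∈ permsOn U) {x : α}
    (hx : x ∉ U) : π⁻¹ x = x :=
  inv_eq_iff_eq.mpr (mem_permsOn.mp hπ x hx).symm

theorem apply_mem_of_mem_permsOn {U : Finset α} {π : Perm α} (hπ : π ∈ permsOn U) {x : α}
    (hx : x ∈ U) : π x ∈ U := by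
  by_contra h
  exact h ((π.injective (mem_permsOn.mp hπ _ h)).symm ▸ hx)

theorem mem_setStabilizer {s : Finset α} {π : Perm α} :
    π ∈ setStabilizer s ↔ ∀ x, π x ∈ s ↔ x ∈ s := by
  simp only [setStabilizer, mem_filter, mem_univ, true_and]
  refine ⟨fun h x => ⟨fun hx => ?_, fun hx => h ▸ mem_image_of_mem π hx⟩, fun h => ?_⟩
  · obtain ⟨y, hy, hyx⟩ := mem_image.mp (h.symm ▸ hx)
    rwa [← π.injective hyx]
  · refine eq_of_subset_of_card_le (fun y hy => ?_) (card_image_of_injective s π.injective).ge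
    obtain ⟨x, hx, rfl⟩ := mem_image.mp hy
    exact (h x).mpr hx

theorem sum_perm_eq_choose_smul {M : Type*} [AddCommMonoid M] (s : Finset α) (F : Perm α → M)
    (c : M) (h : ∀ σ : Perm α, ∑ ρ ∈ setStabilizer s, F (σ * ρ) = c) :
    ∑ π, F π = (Fintype.card α).choose #s • c := by
  have hmaps : ∀ π ∈ (univ : Finset (Perm α)), s.image π ∈ powersetCard #s univ := fun π _ =>
    mem_powersetCard.mpr ⟨subset_univ _, card_image_of_injective s π.injective⟩
  rw [← sum_fiberwise_of_maps_to hmaps, ← card_univ, ← card_powersetCard, ← sum_const]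
  refine sum_congr rfl fun t ht => ?_
  obtain ⟨σ, hσ⟩ := exists_map_finset_eq s t (mem_powersetCard.mp ht).2.symm
  rw [map_eq_image] at hσ
  rw [← h σ]
  refine (sum_equiv (Equiv.mulLeft σ) (fun ρ => ?_) fun _ _ => rfl).symm
  simp only [setStabilizer, mem_filter, mem_univ, true_and, coe_mulLeft, coe_mul,
    ← image_image, ← hσ, coe_toEmbedding]
  exact (image_inj σ.injective).symm

theorem sum_setStabilizer_eq_sum_product {M : Type*} [AddCommMonoid M] (s : Finset α)
    (F : Perm α → M) :
    ∑ π ∈ setStabilizer s, F π = ∑ ρ ∈ permsOn s ×ˢ permsOn sᶜ, F (ρ.1 * ρ.2) := by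
  refine (sum_bij (fun ρ _ => ρ.1 * ρ.2) (fun ρ hρ => ?_) (fun ρ hρ ρ' hρ' he => ?_)
    (fun π hπ => ?_) fun _ _ => rfl).symm
  · obtain ⟨h₁, h₂⟩ := mem_product.mp hρ
    refine mem_setStabilizer.mpr fun x => ?_
    by_cases hx : x ∈ s
    · rw [mul_apply, mem_permsOn.mp h₂ x (by simpa using hx)]
      simp [apply_mem_of_mem_permsOn h₁ hx, hx]
    · have h2x : ρ.2 x ∉ s := by simpa using apply_mem_of_mem_permsOn h₂ (mem_compl.mpr hx)
      rw [mul_apply, mem_permsOn.mp h₁ _ h2x]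
      simp [h2x, hx]
  · obtain ⟨h₁, h₂⟩ := mem_product.mp hρ
    obtain ⟨h₁', h₂'⟩ := mem_product.mp hρ'
    have e₁ : ρ.1 = ρ'.1 := by
      ext x
      by_cases hx : x ∈ s
      · have h := congr($he x)
        rwa [mul_apply, mul_apply, mem_permsOn.mp h₂ x (by simpa using hx),
          mem_permsOn.mp h₂' x (by simpa using hx)] at h
      · rw [mem_permsOn.mp h₁ x hx, mem_permsOn.mp h₁' x hx]
    exact Prod.ext e₁ (mul_left_cancel (e₁ ▸ he))
  · have hπs := mem_setStabilizer.mp hπ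
    set ρ₁ := ofSubtype (π.subtypePerm (p := (· ∈ s)) hπs)
    refine ⟨(ρ₁, ρ₁⁻¹ * π), mem_product.mpr ⟨mem_permsOn.mpr fun x hx =>
      ofSubtype_subtypePerm_of_not_mem hπs hx, mem_permsOn.mpr fun x hx => ?_⟩,
      mul_inv_cancel_left _ _⟩
    rw [mul_apply, inv_eq_iff_eq, ofSubtype_subtypePerm_of_mem hπs (by simpa using hx)]

end Equiv.Perm

open Equiv.Perm

namespace MvPolynomial

variable {σ R : Type*} [Fintype σ] [DecidableEq σ] [CommRing R]

noncomputable def alternant (S : Finset (Perm σ)) (h : MvPolynomial σ R) : MvPolynomial σ R :=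
  ∑ π ∈ S, (sign π : MvPolynomial σ R) * rename π h

theorem X_sub_X_dvd_alternant {U : Finset σ} {a b : σ} (ha : a ∈ U) (hb : b ∈ U) (hab : a ≠ b)
    (h : MvPolynomial σ R) : X a - X b ∣ alternant (permsOn U) h := by
  set τ := swap a b
  have hτ : τ ∈ permsOn U := mem_permsOn.mpr fun x hx =>
    swap_apply_of_ne_of_ne (by rintro rfl; exact hx ha) (by rintro rfl; exact hx hb)
  have hsign : ∀ π : Perm σ, sign (τ * π) = -sign π := fun π => by
    rw [Perm.sign_mul, sign_swap hab, neg_one_mul]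
  -- `π ↦ τ * π` pairs the even permutations in `permsOn U` with the odd ones, and
  -- `rename π h - rename (τ * π) h` is divisible by `X a - X b`.
  have hodd : ∑ π ∈ (permsOn U).filter (fun π => ¬ sign π = 1),
        (sign π : MvPolynomial σ R) * rename π h =
      ∑ π ∈ (permsOn U).filter (fun π => sign π = 1),
        (sign (τ * π) : MvPolynomial σ R) * rename (τ * π) h := by
    refine sum_nbij' (τ * ·) (τ * ·) (fun π hπ => ?_) (fun π hπ => ?_) (fun π _ => ?_)
      (fun π _ => ?_) fun π _ => ?_
    · simp only [mem_filter] at hπ ⊢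
      refine ⟨(mul_mem_permsOn_iff hτ).mpr hπ.1, ?_⟩
      rw [hsign]
      rcases Int.units_eq_one_or (sign π) with h1 | h1 <;> simp_all
    · simp only [mem_filter] at hπ ⊢
      exact ⟨(mul_mem_permsOn_iff hτ).mpr hπ.1, by rw [hsign, hπ.2]; decide⟩
    all_goals simp [τ, ← mul_assoc]
  rw [alternant, ← sum_filter_add_sum_filter_not _ (fun π => sign π = 1), hodd,
    ← sum_add_distrib]
  refine dvd_sum fun π hπ => ?_
  rw [hsign, (mem_filter.mp hπ).2, Perm.coe_mul, ← rename_rename]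
  simpa [← sub_eq_add_neg] using X_sub_X_dvd_sub_rename_swap a b (rename π h)

theorem totalDegree_alternant_le (S : Finset (Perm σ)) (h : MvPolynomial σ R) :
    (alternant S h).totalDegree ≤ h.totalDegree := by
  refine totalDegree_finsetSum_le fun π _ => ?_
  calc ((sign π : MvPolynomial σ R) * rename π h).totalDegree
      ≤ (sign π : MvPolynomial σ R).totalDegree + (rename π h).totalDegree := totalDegree_mul _ _
    _ ≤ 0 + h.totalDegree := by
      gcongr
      · rw [← map_intCast (C : R →+* MvPolynomial σ R), totalDegree_C]
      · exact totalDegree_rename_le _ _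
    _ = h.totalDegree := zero_add _

end MvPolynomial

section EdgeProd

variable {m : ℕ}

def ltPairs (m : ℕ) : Finset (Fin m × Fin m) := univ.filter fun p => p.1 < p.2

theorem mem_ltPairs {p : Fin m × Fin m} : p ∈ ltPairs m ↔ p.1 < p.2 := by
  simp [ltPairs]

theorem prod_ltPairs {M : Type*} [CommMonoid M] (g : Fin m × Fin m → M) :
    ∏ p ∈ ltPairs m, g p = ∏ i, ∏ j ∈ Ioi i, g (i, j) := by
  rw [ltPairs, prod_filter, ← univ_product_univ, prod_product]
  refine prod_congr rfl fun i _ => ?_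
  rw [← prod_filter]
  congr 1
  ext j
  simp

variable (R : Type*) [CommRing R]

noncomputable def edgeProd (E : Finset (Fin m × Fin m)) : MvPolynomial (Fin m) R :=
  ∏ e ∈ E, (X e.1 - X e.2)

theorem edgeProd_ltPairs :
    edgeProd R (ltPairs m) = (-1) ^ #(ltPairs m) * (Matrix.vandermonde (X : Fin m → _)).det := by
  rw [Matrix.det_vandermonde, ← prod_ltPairs fun p => (X p.2 - X p.1 : MvPolynomial (Fin m) R),
    ← prod_const, ← prod_mul_distrib, edgeProd]
  exact prod_congr rfl fun _ _ => by ring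

variable {R}

theorem rename_edgeProd_ltPairs (π : Perm (Fin m)) :
    rename π (edgeProd R (ltPairs m)) =
      (sign π : MvPolynomial (Fin m) R) * edgeProd R (ltPairs m) := by
  have hV : (rename π).mapMatrix (Matrix.vandermonde (X : Fin m → MvPolynomial (Fin m) R)) =
      (Matrix.vandermonde X).submatrix π id := by
    ext i j
    simp [Matrix.vandermonde_apply]
  rw [edgeProd_ltPairs, map_mul, AlgHom.map_det, hV, Matrix.det_permute]
  simp only [map_pow, map_neg, map_one]
  ring

theorem edgeProd_mul_edgeProd_sdiff {E : Finset (Fin m × Fin m)} (hE : E ⊆ ltPairs m) :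
    edgeProd R E * edgeProd R (ltPairs m \ E) = edgeProd R (ltPairs m) := by
  rw [edgeProd, edgeProd, mul_comm, prod_sdiff hE, edgeProd]

theorem edgeProd_filter_mul_edgeProd_filter_not (E : Finset (Fin m × Fin m))
    (p : Fin m × Fin m → Prop) [DecidablePred p] :
    edgeProd R (E.filter p) * edgeProd R (E.filter fun e => ¬ p e) = edgeProd R E :=
  prod_filter_mul_prod_filter_not E p _

theorem edgeProd_ne_zero [IsDomain R] {E : Finset (Fin m × Fin m)} (hE : ∀ e ∈ E, e.1 ≠ e.2) :
    edgeProd R E ≠ 0 :=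
  prod_ne_zero_iff.mpr fun e he => sub_ne_zero.mpr fun h => hE e he (X_injective h)

theorem edgeProd_ltPairs_ne_zero [IsDomain R] : edgeProd R (ltPairs m) ≠ 0 :=
  edgeProd_ne_zero fun _ hp => (mem_ltPairs.mp hp).ne

theorem totalDegree_edgeProd [IsDomain R] {E : Finset (Fin m × Fin m)}
    (hE : ∀ e ∈ E, e.1 ≠ e.2) : (edgeProd R E).totalDegree = #E := by
  classical
  induction E using Finset.induction_on with
  | empty => simp [edgeProd]
  | insert e E he ih =>
    have hE' : ∀ e ∈ E, e.1 ≠ e.2 := fun e' h' => hE e' (mem_insert_of_mem h')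
    have he' : e.1 ≠ e.2 := hE e (mem_insert_self e E)
    rw [edgeProd, prod_insert he, ← edgeProd, totalDegree_mul_of_isDomain
      (sub_ne_zero.mpr fun h => he' (X_injective h)) (edgeProd_ne_zero hE'),
      totalDegree_X_sub_X he', ih hE', card_insert_of_notMem he, add_comm]

theorem vars_edgeProd_subset [Nontrivial R] (E : Finset (Fin m × Fin m)) :
    (edgeProd R E).vars ⊆ E.biUnion fun e => {e.1, e.2} := by
  unfold edgeProd
  refine (vars_prod _).trans (biUnion_mono fun e _ => (vars_sub_subset _).trans ?_)
  simp [vars_X]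

theorem X_sub_X_dvd_edgeProd_sdiff {U : Finset (Fin m)} {E : Finset (Fin m × Fin m)}
    (hE : ∀ e ∈ E, e.1 ∈ U ∧ e.2 ∈ U) {a b : Fin m} (hab : a ≠ b) (hU : a ∉ U ∨ b ∉ U) :
    X a - X b ∣ edgeProd R (ltPairs m \ E) := by
  have hUab : ¬ (a ∈ U ∧ b ∈ U) := by tauto
  have hfac : ∀ e ∈ ltPairs m \ E,
      (X e.1 - X e.2 : MvPolynomial (Fin m) R) ∣ edgeProd R (ltPairs m \ E) :=
    fun e he => dvd_prod_of_mem _ he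
  rcases hab.lt_or_gt with h | h
  · exact hfac (a, b) (mem_sdiff.mpr ⟨mem_ltPairs.mpr h, fun hE' => hUab (hE _ hE')⟩)
  · rw [← neg_sub, neg_dvd]
    exact hfac (b, a) (mem_sdiff.mpr ⟨mem_ltPairs.mpr h, fun hE' => hUab (hE _ hE').symm⟩)

theorem X_sub_X_not_dvd_of_mem_ltPairs [Nontrivial R] {p q : Fin m × Fin m}
    (hp : p ∈ ltPairs m) (hq : q ∈ ltPairs m) (hpq : p ≠ q) :
    ¬ (X p.1 - X p.2 : MvPolynomial (Fin m) R) ∣ X q.1 - X q.2 := by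
  rw [mem_ltPairs] at hp hq
  by_cases h1 : q.1 = p.1 ∨ q.1 = p.2
  · have h2 : q.2 ≠ p.1 ∧ q.2 ≠ p.2 := by
      refine ⟨fun h => ?_, fun h => hpq (Prod.ext ?_ h.symm)⟩ <;> omega
    rw [← dvd_neg, neg_sub]
    exact X_sub_X_not_dvd h2.1 h2.2 hq.ne'
  · push Not at h1
    exact X_sub_X_not_dvd h1.1 h1.2 hq.ne

theorem edgeProd_ltPairs_dvd_alternant [IsDomain R] [UniqueFactorizationMonoid R]
    {U : Finset (Fin m)} {E : Finset (Fin m × Fin m)} (hE : ∀ e ∈ E, e.1 ∈ U ∧ e.2 ∈ U) (g : MvPolynomial (Fin m) R) :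
    edgeProd R (ltPairs m) ∣ alternant (permsOn U) (g * edgeProd R (ltPairs m \ E)) := by
  refine prod_dvd_of_forall_prime_dvd (fun p hp => prime_X_sub_X (mem_ltPairs.mp hp).ne)
    (fun p hp q hq hpq => X_sub_X_not_dvd_of_mem_ltPairs hp hq hpq) fun p hp => ?_
  have hne : p.1 ≠ p.2 := (mem_ltPairs.mp hp).ne
  by_cases hU : p.1 ∈ U ∧ p.2 ∈ U
  · exact X_sub_X_dvd_alternant hU.1 hU.2 hne _
  -- Each `π ∈ permsOn U` fixes an endpoint of `p` outside `U`, so `π⁻¹` maps `p` to a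
  -- non-edge, whose factor in `edgeProd (ltPairs m \ E)` is renamed to `± (X p.1 - X p.2)`.
  refine dvd_sum fun π hπ => Dvd.dvd.mul_left ?_ _
  rw [map_mul]
  refine Dvd.dvd.mul_left ?_ _
  have h := map_dvd (rename π) (X_sub_X_dvd_edgeProd_sdiff (R := R) hE
    (a := π⁻¹ p.1) (b := π⁻¹ p.2) (by simpa using hne) ?_)
  · simpa using h
  · rcases not_and_or.mp hU with h | h
    · exact .inl (by rwa [inv_apply_of_mem_permsOn hπ h])
    · exact .inr (by rwa [inv_apply_of_mem_permsOn hπ h])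

theorem totalDegree_alternant_add_card_le [IsDomain R] {E : Finset (Fin m × Fin m)}
    (hE : E ⊆ ltPairs m) (S : Finset (Perm (Fin m))) (g : MvPolynomial (Fin m) R) :
    (alternant S (g * edgeProd R (ltPairs m \ E))).totalDegree + #E ≤
      g.totalDegree + (edgeProd R (ltPairs m)).totalDegree := by
  have hne : ∀ p ∈ ltPairs m, p.1 ≠ p.2 := fun p hp => (mem_ltPairs.mp hp).ne
  rw [totalDegree_edgeProd hne, ← card_sdiff_add_card_eq_card hE, ← add_assoc]
  gcongr
  calc _ ≤ (g * edgeProd R (ltPairs m \ E)).totalDegree := totalDegree_alternant_le _ _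
    _ ≤ _ := totalDegree_mul _ _
    _ = _ := by rw [totalDegree_edgeProd fun p hp => hne p (mem_sdiff.mp hp).1]

end EdgeProd

section DividedSymmetrization

variable {K : Type*} [Field K] {m : ℕ}

local notation "ψ" => algebraMap (MvPolynomial (Fin m) K) (FractionRing (MvPolynomial (Fin m) K))

noncomputable def dsTerm (π : Perm (Fin m)) (f D : MvPolynomial (Fin m) K) :
    FractionRing (MvPolynomial (Fin m) K) :=
  ψ (rename π f) / ψ (rename π D)

theorem DS_eq_sum_dsTerm (E : Finset (Fin m × Fin m)) (f : MvPolynomial (Fin m) K) :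
    DS E f = ∑ π, dsTerm π f (edgeProd K E) :=
  rfl

theorem DSOn_eq_sum_dsTerm (U : Finset (Fin m)) (E : Finset (Fin m × Fin m))
    (f : MvPolynomial (Fin m) K) : DSOn U E f = ∑ π ∈ permsOn U, dsTerm π f (edgeProd K E) :=
  sum_congr (by ext; simp [permsOn]) fun _ _ => rfl

theorem algebraMap_edgeProd_ltPairs_ne_zero : ψ (edgeProd K (ltPairs m)) ≠ 0 :=
  mt IsFractionRing.to_map_eq_zero_iff.mp edgeProd_ltPairs_ne_zero

theorem dsTerm_mul_edgeProd_ltPairs {E : Finset (Fin m × Fin m)} (hE : E ⊆ ltPairs m)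
    (π : Perm (Fin m)) (g : MvPolynomial (Fin m) K) :
    dsTerm π g (edgeProd K E) * ψ (edgeProd K (ltPairs m)) =
      ψ (sign π * rename π (g * edgeProd K (ltPairs m \ E))) := by
  have hD : ψ (rename π (edgeProd K E)) ≠ 0 :=
    mt IsFractionRing.to_map_eq_zero_iff.mp <| (map_ne_zero_iff _ (rename_injective _ π.injective)).mpr
      (edgeProd_ne_zero fun e he => (mem_ltPairs.mp (hE he)).ne)
  have hsign : (sign π : MvPolynomial (Fin m) K) * sign π = 1 := by
    rw [← Int.cast_mul, ← Units.val_mul, Int.units_mul_self, Units.val_one, Int.cast_one]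
  have hW : edgeProd K (ltPairs m) =
      sign π * (rename π (edgeProd K E) * rename π (edgeProd K (ltPairs m \ E))) := by
    rw [← map_mul, edgeProd_mul_edgeProd_sdiff hE, rename_edgeProd_ltPairs, ← mul_assoc, hsign,
      one_mul]
  rw [dsTerm, div_mul_eq_mul_div, div_eq_iff hD, ← map_mul, ← map_mul]
  congr 1
  rw [hW, map_mul]
  ring

theorem DSOn_mul_edgeProd_ltPairs {E : Finset (Fin m × Fin m)} (hE : E ⊆ ltPairs m)
    (U : Finset (Fin m)) (g : MvPolynomial (Fin m) K) :
    DSOn U E g * ψ (edgeProd K (ltPairs m)) =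
      ψ (alternant (permsOn U) (g * edgeProd K (ltPairs m \ E))) := by
  rw [DSOn_eq_sum_dsTerm, sum_mul, alternant, map_sum]
  exact sum_congr rfl fun π _ => dsTerm_mul_edgeProd_ltPairs hE π g

theorem exists_DSOn_eq_C {U : Finset (Fin m)} {E : Finset (Fin m × Fin m)}
    (hE : ∀ e ∈ E, e.1 < e.2 ∧ e.1 ∈ U ∧ e.2 ∈ U) {g : MvPolynomial (Fin m) K}
    (hg : g.totalDegree ≤ #E) : ∃ c : K, DSOn U E g = ψ (C c) := by
  have hEp : E ⊆ ltPairs m := fun e he => mem_ltPairs.mpr (hE e he).1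
  obtain ⟨c, hc⟩ := exists_eq_mul_C_of_dvd_of_totalDegree_le
    (edgeProd_ltPairs_dvd_alternant (fun e he => (hE e he).2) g)
    (by have := totalDegree_alternant_add_card_le hEp (permsOn U) g; omega)
  refine ⟨c, mul_right_cancel₀ algebraMap_edgeProd_ltPairs_ne_zero ?_⟩
  rw [DSOn_mul_edgeProd_ltPairs hEp, hc, map_mul, mul_comm]

theorem DSOn_eq_zero_of_totalDegree_lt {U : Finset (Fin m)} {E : Finset (Fin m × Fin m)}
    (hE : ∀ e ∈ E, e.1 < e.2 ∧ e.1 ∈ U ∧ e.2 ∈ U) {g : MvPolynomial (Fin m) K}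
    (hg : g.totalDegree < #E) : DSOn U E g = 0 := by
  have hEp : E ⊆ ltPairs m := fun e he => mem_ltPairs.mpr (hE e he).1
  have hN := eq_zero_of_dvd_of_totalDegree_lt
    (edgeProd_ltPairs_dvd_alternant (fun e he => (hE e he).2) g)
    (by have := totalDegree_alternant_add_card_le hEp (permsOn U) g; omega)
  have h := DSOn_mul_edgeProd_ltPairs (K := K) hEp U g
  rw [hN, map_zero] at h
  exact (mul_eq_zero.mp h).resolve_right algebraMap_edgeProd_ltPairs_ne_zero

theorem exists_DSOn_mul_DSOn_eq_C {U W : Finset (Fin m)} {EU EW : Finset (Fin m × Fin m)}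
    (hEU : ∀ e ∈ EU, e.1 < e.2 ∧ e.1 ∈ U ∧ e.2 ∈ U) (hEW : ∀ e ∈ EW, e.1 < e.2 ∧ e.1 ∈ W ∧ e.2 ∈ W)
    {u w : MvPolynomial (Fin m) K} (hdeg : u.totalDegree + w.totalDegree ≤ #EU + #EW) :
    ∃ c : K, DSOn U EU u * DSOn W EW w = ψ (C c) := by
  by_cases hu : u.totalDegree < #EU
  · exact ⟨0, by rw [DSOn_eq_zero_of_totalDegree_lt hEU hu, zero_mul, map_zero, map_zero]⟩
  by_cases hw : w.totalDegree < #EW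
  · exact ⟨0, by rw [DSOn_eq_zero_of_totalDegree_lt hEW hw, mul_zero, map_zero, map_zero]⟩
  obtain ⟨c₁, hc₁⟩ := exists_DSOn_eq_C hEU (g := u) (by omega)
  obtain ⟨c₂, hc₂⟩ := exists_DSOn_eq_C hEW (g := w) (by omega)
  exact ⟨c₁ * c₂, by rw [hc₁, hc₂, C_mul, map_mul]⟩

theorem dsTerm_congr {π π' : Perm (Fin m)} {f D : MvPolynomial (Fin m) K}
    (hf : ∀ x ∈ f.vars, π x = π' x) (hD : ∀ x ∈ D.vars, π x = π' x) :
    dsTerm π f D = dsTerm π' f D := by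
  rw [dsTerm, dsTerm, rename_congr_vars hf, rename_congr_vars hD]

theorem dsTerm_mul (π : Perm (Fin m)) (f₁ f₂ D₁ D₂ : MvPolynomial (Fin m) K) :
    dsTerm π (f₁ * f₂) (D₁ * D₂) = dsTerm π f₁ D₁ * dsTerm π f₂ D₂ := by
  simp only [dsTerm, map_mul, div_mul_div_comm]

theorem dsTerm_sum {ι : Type*} (π : Perm (Fin m)) (s : Finset ι)
    (f : ι → MvPolynomial (Fin m) K) (D : MvPolynomial (Fin m) K) :
    dsTerm π (∑ i ∈ s, f i) D = ∑ i ∈ s, dsTerm π (f i) D := by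
  simp only [dsTerm, map_sum, sum_div]

theorem dsTerm_mul_of_mem_permsOn {U : Finset (Fin m)} {ρ₁ ρ₂ : Perm (Fin m)}
    (h₁ : ρ₁ ∈ permsOn U) (h₂ : ρ₂ ∈ permsOn Uᶜ) {u w DU DW : MvPolynomial (Fin m) K}
    (hu : ∀ x ∈ u.vars, x ∈ U) (hDU : ∀ x ∈ DU.vars, x ∈ U)
    (hw : ∀ x ∈ w.vars, x ∉ U) (hDW : ∀ x ∈ DW.vars, x ∉ U) :
    dsTerm (ρ₁ * ρ₂) (u * w) (DU * DW) = dsTerm ρ₁ u DU * dsTerm ρ₂ w DW := by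
  have hin : ∀ x ∈ U, (ρ₁ * ρ₂) x = ρ₁ x := fun x hx => by
    rw [mul_apply, mem_permsOn.mp h₂ x (by simpa using hx)]
  have hout : ∀ x ∉ U, (ρ₁ * ρ₂) x = ρ₂ x := fun x hx => by
    rw [mul_apply, mem_permsOn.mp h₁ _
      (by simpa using apply_mem_of_mem_permsOn h₂ (mem_compl.mpr hx))]
  rw [dsTerm_mul, dsTerm_congr (fun x hx => hin x (hu x hx)) (fun x hx => hin x (hDU x hx)),
    dsTerm_congr (fun x hx => hout x (hw x hx)) (fun x hx => hout x (hDW x hx))]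

theorem sum_setStabilizer_dsTerm {U : Finset (Fin m)} {EU EW : Finset (Fin m × Fin m)}
    (hEU : ∀ e ∈ EU, e.1 ∈ U ∧ e.2 ∈ U) (hEW : ∀ e ∈ EW, e.1 ∉ U ∧ e.2 ∉ U) {ι : Type*}
    (s : Finset ι) (u w : ι → MvPolynomial (Fin m) K) (hu : ∀ i ∈ s, ∀ x ∈ (u i).vars, x ∈ U)
    (hw : ∀ i ∈ s, ∀ x ∈ (w i).vars, x ∉ U) :
    ∑ π ∈ setStabilizer U, dsTerm π (∑ i ∈ s, u i * w i) (edgeProd K EU * edgeProd K EW) =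
      ∑ i ∈ s, DSOn U EU (u i) * DSOn Uᶜ EW (w i) := by
  have hDU : ∀ x ∈ (edgeProd K EU).vars, x ∈ U := fun x hx => by
    obtain ⟨e, he, hx⟩ := mem_biUnion.mp (vars_edgeProd_subset EU hx)
    rcases mem_insert.mp hx with rfl | hx
    · exact (hEU e he).1
    · exact mem_singleton.mp hx ▸ (hEU e he).2
  have hDW : ∀ x ∈ (edgeProd K EW).vars, x ∉ U := fun x hx => by
    obtain ⟨e, he, hx⟩ := mem_biUnion.mp (vars_edgeProd_subset EW hx)
    rcases mem_insert.mp hx with rfl | hx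
    · exact (hEW e he).1
    · exact mem_singleton.mp hx ▸ (hEW e he).2
  simp_rw [sum_setStabilizer_eq_sum_product, dsTerm_sum, DSOn_eq_sum_dsTerm, sum_mul_sum,
    ← sum_product' (permsOn U)]
  rw [sum_comm (s := permsOn U ×ˢ permsOn Uᶜ)]
  refine sum_congr rfl fun i hi => sum_congr rfl fun ρ hρ => ?_
  obtain ⟨h₁, h₂⟩ := mem_product.mp hρ
  exact dsTerm_mul_of_mem_permsOn h₁ h₂ (hu i hi) hDU (hw i hi) hDW

theorem sum_dsTerm_mul_left {S : Finset (Perm (Fin m))} {f D : MvPolynomial (Fin m) K} {c : K}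
    (h : ∑ ρ ∈ S, dsTerm ρ f D = ψ (C c)) (σ : Perm (Fin m)) :
    ∑ ρ ∈ S, dsTerm (σ * ρ) f D = ψ (C c) := by
  -- Renaming the variables by `σ` extends to an automorphism of the fraction field fixing `K`.
  let Φ : FractionRing (MvPolynomial (Fin m) K) ≃+* FractionRing (MvPolynomial (Fin m) K) :=
    IsFractionRing.ringEquivOfRingEquiv (renameEquiv K σ).toRingEquiv
  have hΦ : ∀ p, Φ (ψ p) = ψ (rename σ p) := IsFractionRing.ringEquivOfRingEquiv_algebraMap _
  have hmul : ∀ ρ, dsTerm (σ * ρ) f D = Φ (dsTerm ρ f D) := fun ρ => by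
    rw [dsTerm, dsTerm, map_div₀, hΦ, hΦ, Perm.coe_mul, ← rename_rename, ← rename_rename]
  simp_rw [hmul, ← map_sum, h, hΦ, rename_C]

end DividedSymmetrization

/-- let `G = (V, E)` be a disconnected graph, `V = U ⊔ W` with no edges
between `U` and `W = Uᶜ`, `EU`, `EW` the edges within `U`, `W` respectively.  If
`f = Σ_i u_i·w_i` with `deg f ≤ |E|`, each `u_i` depending only on the variables in `U`,
each `w_i` only on those in `W`, and `deg u_i + deg w_i ≤ deg f`, then
`DS_G(f) = C(|V|,|U|) · Σ_i DS_{GU}(u_i) · DS_{GW}(w_i)`, and any summand with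
`deg u_i < |EU|` or `deg w_i < |EW|` is zero. -/
theorem divided_symmetrization_disconnected {K : Type*} [Field K] (m : ℕ)
    (U : Finset (Fin m)) (E : Finset (Fin m × Fin m))
    (hEo : ∀ e ∈ E, e.1 < e.2)
    (hsplit : ∀ e ∈ E, (e.1 ∈ U ∧ e.2 ∈ U) ∨ (e.1 ∉ U ∧ e.2 ∉ U))
    {ι : Type*} (s : Finset ι) (u w : ι → MvPolynomial (Fin m) K)
    (f : MvPolynomial (Fin m) K) (hf : f = ∑ i ∈ s, u i * w i)
    (hu : ∀ i ∈ s, ∀ x ∈ (u i).vars, x ∈ U)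
    (hw : ∀ i ∈ s, ∀ x ∈ (w i).vars, x ∉ U)
    (hdegs : ∀ i ∈ s, (u i).totalDegree + (w i).totalDegree ≤ f.totalDegree)
    (hdeg : f.totalDegree ≤ E.card) :
    DS E f = (m.choose U.card : FractionRing (MvPolynomial (Fin m) K)) *
        ∑ i ∈ s, DSOn U (E.filter fun e => e.1 ∈ U) (u i) *
          DSOn Uᶜ (E.filter fun e => e.1 ∉ U) (w i) ∧
      ∀ i ∈ s, ((u i).totalDegree < (E.filter fun e => e.1 ∈ U).card ∨
          (w i).totalDegree < (E.filter fun e => e.1 ∉ U).card) →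
        DSOn U (E.filter fun e => e.1 ∈ U) (u i) *
          DSOn Uᶜ (E.filter fun e => e.1 ∉ U) (w i) = 0 := by
  set ψ := algebraMap (MvPolynomial (Fin m) K) (FractionRing (MvPolynomial (Fin m) K))
  set EU := E.filter fun e => e.1 ∈ U
  set EW := E.filter fun e => e.1 ∉ U
  have hEU : ∀ e ∈ EU, e.1 < e.2 ∧ e.1 ∈ U ∧ e.2 ∈ U := fun e he => by
    obtain ⟨heE, he1⟩ := mem_filter.mp he
    exact ⟨hEo e heE, (hsplit e heE).resolve_right fun h => h.1 he1⟩
  have hEW : ∀ e ∈ EW, e.1 < e.2 ∧ e.1 ∈ Uᶜ ∧ e.2 ∈ Uᶜ := fun e he => by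
    obtain ⟨heE, he1⟩ := mem_filter.mp he
    have h := (hsplit e heE).resolve_left fun h => he1 h.1
    exact ⟨hEo e heE, mem_compl.mpr h.1, mem_compl.mpr h.2⟩
  refine ⟨?_, fun i _ h => h.elim
    (fun h => by rw [DSOn_eq_zero_of_totalDegree_lt hEU h, zero_mul])
    (fun h => by rw [DSOn_eq_zero_of_totalDegree_lt hEW h, mul_zero])⟩
  have hcard : #EU + #EW = #E := card_filter_add_card_filter_not _
  have hconst : ∀ i ∈ s, ∃ c : K, DSOn U EU (u i) * DSOn Uᶜ EW (w i) = ψ (C c) := fun i hi =>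
    exists_DSOn_mul_DSOn_eq_C hEU hEW (by have := hdegs i hi; omega)
  choose! c hc using hconst
  have hstab : ∑ π ∈ setStabilizer U, dsTerm π f (edgeProd K E) = ψ (C (∑ i ∈ s, c i)) := by
    rw [← edgeProd_filter_mul_edgeProd_filter_not E fun e => e.1 ∈ U, hf,
      sum_setStabilizer_dsTerm (fun e he => (hEU e he).2)
      (fun e he => by simpa using (hEW e he).2) s u w hu hw, sum_congr rfl hc, map_sum, map_sum]
  rw [DS_eq_sum_dsTerm, sum_perm_eq_choose_smul U _ _ (sum_dsTerm_mul_left hstab),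
    Fintype.card_fin, nsmul_eq_mul, sum_congr rfl hc, map_sum, map_sum]
end

section
/- Let T = (V, E) be a tree on the well-ordered variable set V with |V| = n ≥ 2, and let v_1 > v_2 be the two maximal elements of V. For x ∈ V, let τ(x^{n−1}) denote sign(x^{n−1}) times the number of x^{n−1}-acceptable permutations of V. Then Σ_{x∈V} τ(x^{n−1}) = 0. -/
open scoped Classical

/-!
For a tree and the monomial `x^{n-1}`, the component of `T ∖ (a, b)` containing `b` has
negative weight iff it misses `x`, so the `x^{n-1}`-acceptable permutations are those that
increase along every edge directed away from `x`. Such a `π` sends `x` to `0`, and the vertex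
`v = π⁻¹ 1` must be a neighbour of `x`. Then `(0 1) ∘ π` is `v^{n-1}`-acceptable, and since
`x` and `v` are adjacent, the inversive edges for `x^{n-1}` and `v^{n-1}` differ exactly in the
edge `xv`, so the signs are opposite. Hence `(x, π) ↦ (π⁻¹ 1, (0 1) ∘ π)` is a sign-reversing
involution on the pairs counted by `∑ₓ τ(x^{n-1})`.
-/

open Finset

lemma sum_weight_neg_iff {V : Type*} [DecidableEq V] {n : ℕ} {C : Finset V} (hC : C.Nonempty)
    (hCn : #C < n) (x : V) :
    ∑ z ∈ C, (if z = x then (n : ℤ) - 2 else -1) < 0 ↔ x ∉ C := by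
  have := hC.card_pos
  rw [sum_ite, filter_eq', filter_ne', sum_const, sum_const]
  split_ifs with hx
  · rw [card_singleton, card_erase_of_mem hx, iff_false_intro (not_not.mpr hx), iff_false]
    simp only [one_smul, Int.nsmul_eq_mul, Nat.cast_pred this]
    omega
  · rw [card_empty, erase_eq_of_notMem hx, iff_true_intro hx, iff_true]
    simp only [zero_smul, Int.nsmul_eq_mul]
    omega

lemma Fin.swap_zero_one_lt_swap_zero_one_iff {m : ℕ} {p q : Fin (m + 2)}
    (h : s(p, q) ≠ s(0, 1)) : Equiv.swap 0 1 p < Equiv.swap 0 1 q ↔ p < q := by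
  simp only [ne_eq, Sym2.eq_iff, not_or, not_and_or] at h
  simp only [Equiv.swap_apply_def, Fin.lt_def, Fin.ext_iff, Fin.val_zero, Fin.val_one] at h ⊢
  split_ifs <;> simp only [Fin.val_zero, Fin.val_one] <;> omega

lemma card_filter_sym2_mk_eq_one {V : Type*} [Preorder V] {E : Finset (V × V)}
    (hE : ∀ e ∈ E, e.1 < e.2) {a b : V} (hab : (a, b) ∈ E) :
    #{e ∈ E | s(e.1, e.2) = s(a, b)} = 1 := by
  refine card_eq_one.mpr ⟨(a, b), eq_singleton_iff_unique_mem.mpr ⟨by simp [hab], ?_⟩⟩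
  simp only [mem_filter, Sym2.eq_iff, and_imp, Prod.forall]
  rintro c d hcd (⟨rfl, rfl⟩ | ⟨rfl, rfl⟩)
  · rfl
  · exact absurd (hE _ hab) (hE _ hcd).not_gt

lemma Finset.sum_mul_card_filter_eq_sum_filter {α β R : Type*} [Fintype α] [Fintype β]
    [CommSemiring R] (P : α → β → Prop) (f : α → R) :
    ∑ x, f x * #{y | P x y} = ∑ p : α × β with P p.1 p.2, f p.1 := by
  rw [sum_filter, Fintype.sum_prod_type]
  refine sum_congr rfl fun x _ ↦ ?_
  rw [← sum_filter]
  simp [mul_comm]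

namespace SimpleGraph

variable {V : Type*} {G : SimpleGraph V} {a b r x v : V}

lemma IsAcyclic.not_reachable_deleteEdges (hG : G.IsAcyclic) (hab : G.Adj a b) :
    ¬ (G.deleteEdges {s(a, b)}).Reachable a b :=
  isBridge_iff.mp (isAcyclic_iff_forall_adj_isBridge.mp hG hab)

lemma Connected.reachable_deleteEdges_or (hG : G.Connected) (a b r : V) :
    (G.deleteEdges {s(a, b)}).Reachable a r ∨ (G.deleteEdges {s(a, b)}).Reachable b r := by
  obtain ⟨P, hP⟩ := hG.preconnected.exists_isPath r a
  by_cases habP : s(a, b) ∈ P.edges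
  · have hbP := P.snd_mem_support_of_mem_edges habP
    have haP := Walk.endpoint_notMem_support_takeUntil hP hbP (P.adj_of_mem_edges habP).ne
    exact .inr (reachable_deleteEdges_iff_exists_walk.mpr
      ⟨P.takeUntil b hbP, fun h ↦ haP ((P.takeUntil b hbP).fst_mem_support_of_mem_edges h)⟩).symm
  · exact .inl (reachable_deleteEdges_iff_exists_walk.mpr ⟨P, habP⟩).symm

lemma IsTree.reachable_deleteEdges_iff (hG : G.IsTree) (hab : G.Adj a b) (r : V) :
    (G.deleteEdges {s(a, b)}).Reachable a r ↔ ¬ (G.deleteEdges {s(a, b)}).Reachable b r :=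
  ⟨fun ha hb ↦ hG.isAcyclic.not_reachable_deleteEdges hab (ha.trans hb.symm),
    (hG.connected.reachable_deleteEdges_or a b r).resolve_right⟩

lemma IsTree.sum_weight_component_neg_iff [Fintype V] [DecidableEq V] (hG : G.IsTree)
    (hab : G.Adj a b) (x : V) :
    ∑ z ∈ univ.filter (fun z ↦ (G.deleteEdges {s(a, b)}).Reachable b z),
      (if z = x then (Fintype.card V : ℤ) - 2 else -1) < 0 ↔
    ¬ (G.deleteEdges {s(a, b)}).Reachable b x := by
  have ha : a ∉ univ.filter (fun z ↦ (G.deleteEdges {s(a, b)}).Reachable b z) := by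
    simpa using fun h ↦ hG.isAcyclic.not_reachable_deleteEdges hab h.symm
  rw [sum_weight_neg_iff ⟨b, by simp⟩ (card_lt_univ_of_notMem ha), mem_filter]
  simp

/-- On a tree this is `r^{n-1}`-acceptability, see `IsTree.forall_lt_iff_isIncreasingAwayFrom`. -/
def IsIncreasingAwayFrom {α : Type*} [LT α] (G : SimpleGraph V) (r : V) (π : V → α) : Prop :=
  ∀ ⦃a b⦄, G.Adj a b → (G.deleteEdges {s(a, b)}).Reachable a r → π a < π b

section LinearOrder

variable {α : Type*} [LinearOrder α] {π : V → α}

lemma IsTree.forall_lt_iff_isIncreasingAwayFrom {E : Finset (V × V)}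
    (hG : G.IsTree) (hadj : ∀ i j, G.Adj i j ↔ (i, j) ∈ E ∨ (j, i) ∈ E) (hπ : π.Injective)
    (r : V) :
    (∀ e ∈ E, (π e.1 < π e.2 ↔ ¬ (G.deleteEdges {s(e.1, e.2)}).Reachable e.2 r)) ↔
      G.IsIncreasingAwayFrom r π := by
  constructor
  · intro hE a b hab ha
    rcases (hadj a b).mp hab with he | he
    · exact (hE _ he).mpr ((hG.reachable_deleteEdges_iff hab r).mp ha)
    · have hba := (hE _ he).not.mpr (by rw [Sym2.eq_swap]; exact not_not.mpr ha)
      exact (not_lt.mp hba).lt_of_ne (hπ.ne hab.ne)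
  · intro hI e he
    have hab := (hadj _ _).mpr (.inl he)
    refine ⟨fun hlt hb ↦ (hI hab.symm (by rwa [Sym2.eq_swap])).not_gt hlt, fun hb ↦ ?_⟩
    exact hI hab ((hG.reachable_deleteEdges_iff hab r).mpr hb)

lemma IsIncreasingAwayFrom.exists_adj_lt (h : G.IsIncreasingAwayFrom r π) (hG : G.Connected)
    {y : V} (hy : y ≠ r) : ∃ w, G.Adj y w ∧ π w < π y := by
  obtain ⟨P, hP⟩ := hG.preconnected.exists_isPath y r
  cases P with
  | nil => exact absurd rfl hy
  | @cons _ w _ hyw Q =>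
    rw [Walk.cons_isPath_iff] at hP
    exact ⟨w, hyw, h hyw.symm (reachable_deleteEdges_iff_exists_walk.mpr
      ⟨Q, fun he ↦ hP.2 (Q.snd_mem_support_of_mem_edges he)⟩)⟩

end LinearOrder

namespace IsIncreasingAwayFrom

variable {m : ℕ} {π : V ≃ Fin (m + 2)}

lemma apply_eq_zero (h : G.IsIncreasingAwayFrom r π) (hG : G.Connected) : π r = 0 := by
  by_contra hr
  obtain ⟨w, -, hw⟩ := h.exists_adj_lt hG (y := π.symm 0) (by rintro rfl; simp at hr)
  simp at hw

lemma adj_symm_one (h : G.IsIncreasingAwayFrom r π) (hG : G.Connected) :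
    G.Adj r (π.symm 1) := by
  have hr := h.apply_eq_zero hG
  obtain ⟨w, hw, hlt⟩ := h.exists_adj_lt hG (y := π.symm 1) (by rintro rfl; simp at hr)
  rw [π.apply_symm_apply, Fin.lt_one_iff, ← hr] at hlt
  obtain rfl : w = r := π.injective hlt
  exact hw.symm

lemma trans_swap (h : G.IsIncreasingAwayFrom r π) (hG : G.IsTree) :
    G.IsIncreasingAwayFrom (π.symm 1) (π.trans (Equiv.swap 0 1)) := by
  have hrv := h.adj_symm_one hG.connected
  have hr := h.apply_eq_zero hG.connected
  intro a b hab ha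
  simp only [Equiv.trans_apply]
  by_cases he : s(a, b) = s(r, π.symm 1)
  · rcases Sym2.eq_iff.mp he with ⟨rfl, rfl⟩ | ⟨rfl, rfl⟩
    · exact absurd ha (hG.isAcyclic.not_reachable_deleteEdges hab)
    · simp [hr]
  · have hπ : s(π a, π b) ≠ s(0, 1) := by
      rw [← hr, ← π.apply_symm_apply 1, ← Sym2.map_mk, ← Sym2.map_mk]
      exact (Sym2.map.injective π.injective).ne he
    have hrv' : (G.deleteEdges {s(a, b)}).Adj r (π.symm 1) := by
      simpa [hrv] using Ne.symm he
    rw [Fin.swap_zero_one_lt_swap_zero_one_iff hπ]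
    exact h hab (ha.trans hrv'.reachable.symm)

end IsIncreasingAwayFrom

/-- The sign of the monomial `x^{n-1}`: an edge `(a, b)` is inversive for it iff `x` lies on the
side of `b` once the edge is removed. -/
noncomputable def rootSign (G : SimpleGraph V) (E : Finset (V × V)) (x : V) : ℤ :=
  (-1) ^ #{e ∈ E | (G.deleteEdges {s(e.1, e.2)}).Reachable e.2 x}

lemma IsAcyclic.rootSign_eq (hG : G.IsAcyclic) (hxv : G.Adj x v) (E : Finset (V × V)) :
    G.rootSign E x = (-1) ^ #{e ∈ E | s(e.1, e.2) = s(x, v)} * G.rootSign E v := by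
  simp only [rootSign, ← prod_const, prod_filter, ← prod_mul_distrib]
  refine prod_congr rfl fun e _ ↦ ?_
  have hbr := hG.not_reachable_deleteEdges hxv
  by_cases he : s(e.1, e.2) = s(x, v)
  · obtain rfl | rfl : e = (x, v) ∨ e = (v, x) := by
      rcases Sym2.eq_iff.mp he with ⟨h1, h2⟩ | ⟨h1, h2⟩
      exacts [.inl (Prod.ext h1 h2), .inr (Prod.ext h1 h2)]
    · simp [mt Reachable.symm hbr]
    · simp [Sym2.eq_swap (a := v), hbr]
  · have hxv' : (G.deleteEdges {s(e.1, e.2)}).Adj x v := by simpa [hxv] using Ne.symm he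
    have hxv_iff : (G.deleteEdges {s(e.1, e.2)}).Reachable e.2 x ↔
        (G.deleteEdges {s(e.1, e.2)}).Reachable e.2 v :=
      ⟨fun h ↦ h.trans hxv'.reachable, fun h ↦ h.trans hxv'.symm.reachable⟩
    simp [he, hxv_iff]

lemma IsAcyclic.rootSign_eq_neg [LinearOrder V] {E : Finset (V × V)} (hG : G.IsAcyclic)
    (hE : ∀ e ∈ E, e.1 < e.2) (hadj : ∀ i j, G.Adj i j ↔ (i, j) ∈ E ∨ (j, i) ∈ E)
    (hxv : G.Adj x v) : G.rootSign E x = -G.rootSign E v := by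
  rw [hG.rootSign_eq hxv]
  rcases (hadj x v).mp hxv with he | he
  · rw [card_filter_sym2_mk_eq_one hE he]
    ring
  · rw [Sym2.eq_swap, card_filter_sym2_mk_eq_one hE he]
    ring

theorem IsTree.sum_rootSign_eq_zero [Fintype V] [LinearOrder V] {m : ℕ} {E : Finset (V × V)}
    (hG : G.IsTree) (hE : ∀ e ∈ E, e.1 < e.2)
    (hadj : ∀ i j, G.Adj i j ↔ (i, j) ∈ E ∨ (j, i) ∈ E) :
    ∑ p : V × (V ≃ Fin (m + 2)) with G.IsIncreasingAwayFrom p.1 p.2, G.rootSign E p.1 = 0 := by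
  refine sum_involution (fun p _ ↦ (p.2.symm 1, p.2.trans (Equiv.swap 0 1)))
    (fun p hp ↦ ?_) (fun p hp _ ↦ ?_) (fun p hp ↦ ?_) (fun p hp ↦ ?_)
  all_goals
    obtain ⟨x, π⟩ := p
    have hπ : G.IsIncreasingAwayFrom x π := (mem_filter.mp hp).2
    have hx : π x = 0 := hπ.apply_eq_zero hG.connected
  · rw [hG.isAcyclic.rootSign_eq_neg hE hadj (hπ.adj_symm_one hG.connected), neg_add_cancel]
  · intro h
    have h1 : π.symm 1 = x := congrArg Prod.fst h
    simp [← h1] at hx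
  · exact mem_filter.mpr ⟨mem_univ _, hπ.trans_swap hG⟩
  · refine Prod.ext ?_ (Equiv.ext fun _ ↦ Equiv.swap_apply_self _ _ _)
    simp [Equiv.symm_apply_eq, hx]

end SimpleGraph

open SimpleGraph in
/-- let `T = (V, E)` be a tree on the well-ordered set `V = Fin n`, `n ≥ 2`
(edges are the pairs in `E`, oriented with `e.1 < e.2`).  For `x ∈ V` consider the
monomial `x^{n−1}`, i.e. the weights `w x = n − 2` and `w y = −1` for `y ≠ x`; an edge
`e = (a, b)` is regular iff the component of `T ∖ e` containing `b` has negative total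
weight, and `τ(x^{n−1})` is `(−1)^{#inversive edges}` times the number of permutations
`π` of `V` such that for every edge `e = (a, b)`, `π a < π b ↔ e` is regular.  Then
`Σ_{x ∈ V} τ(x^{n−1}) = 0`. -/
theorem sum_tau_vanishes (n : ℕ) (hn : 2 ≤ n)
    (E : Finset (Fin n × Fin n)) (hEo : ∀ e ∈ E, e.1 < e.2)
    (T : SimpleGraph (Fin n))
    (hadj : ∀ i j : Fin n, T.Adj i j ↔ (i, j) ∈ E ∨ (j, i) ∈ E)
    (hT : T.IsTree) :
    ∑ x : Fin n,
      ((-1 : ℤ) ^ (E.filter fun e =>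
          ¬ ∑ z ∈ Finset.univ.filter
              (fun z => (T.deleteEdges {s(e.1, e.2)}).Reachable e.2 z),
            (if z = x then (n : ℤ) - 2 else -1) < 0).card *
        ((Finset.univ.filter fun π : Equiv.Perm (Fin n) =>
          ∀ e ∈ E, (π e.1 < π e.2 ↔
            ∑ z ∈ Finset.univ.filter
                (fun z => (T.deleteEdges {s(e.1, e.2)}).Reachable e.2 z),
              (if z = x then (n : ℤ) - 2 else -1) < 0)).card : ℤ)) = 0 := by
  obtain ⟨m, rfl⟩ : ∃ m, n = m + 2 := ⟨n - 2, by omega⟩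
  have hregular : ∀ x, ∀ e ∈ E, ∑ z ∈ univ.filter
      (fun z => (T.deleteEdges {s(e.1, e.2)}).Reachable e.2 z),
        (if z = x then ((m + 2 : ℕ) : ℤ) - 2 else -1) < 0 ↔
      ¬ (T.deleteEdges {s(e.1, e.2)}).Reachable e.2 x := fun x e he ↦ by
    simpa using hT.sum_weight_component_neg_iff ((hadj _ _).mpr (.inl he)) x
  calc _ = ∑ x, T.rootSign E x *
          #{π : Equiv.Perm (Fin (m + 2)) | T.IsIncreasingAwayFrom x π} := by
        refine sum_congr rfl fun x _ ↦ ?_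
        congr 3
        · ext e
          simp only [mem_filter]
          exact and_congr_right fun he ↦ by rw [hregular x e he, not_not]
        · refine filter_congr fun π _ ↦ ?_
          rw [← hT.forall_lt_iff_isIncreasingAwayFrom hadj π.injective]
          exact forall₂_congr fun e he ↦ by rw [hregular x e he]
    _ = ∑ p : Fin (m + 2) × Equiv.Perm (Fin (m + 2)) with T.IsIncreasingAwayFrom p.1 p.2,
          T.rootSign E p.1 := sum_mul_card_filter_eq_sum_filter _ _
    _ = 0 := hT.sum_rootSign_eq_zero hEo hadj
end

section
/- (Lemma 2) Let G be the path on the ordered variable set V = {x_0, x_1, ..., x_n} with edge set E = {(x_i, x_{i+1}) : 0 ≤ i ≤ n−1}, and let Φ = DS_G. Then for each i with 0 ≤ i ≤ n, Φ(x_i^n) = (−1)^i · binom(n, i). -/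
open MvPolynomial

/-- The edge set of the path `x_0 — x_1 — ⋯ — x_n`: the pairs `(x_i, x_{i+1})`,
`0 ≤ i ≤ n−1`. -/
def pathEdges (n : ℕ) : Finset (Fin (n + 1) × Fin (n + 1)) :=
  Finset.univ.image fun i : Fin n => (i.castSucc, i.succ)

/-- `pathY n K k = y_k = x_0 + x_1 + ⋯ + x_k`. -/
noncomputable def pathY (n : ℕ) (K : Type*) [Field K] (k : Fin (n + 1)) :
    MvPolynomial (Fin (n + 1)) K :=
  ∑ j ∈ Finset.Iic k, X j

/-! Write `zⱼ` for the variable `xⱼ` and fix the value `p = σ i`. At position `i` the path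
splits into two arms hanging from `p`, the left one read backwards, which costs the sign `(-1)^i`.
For a single arm with root `t`, the sum over all orderings of its vertices telescopes by partial
fractions to `1 / ∏ⱼ (t - zⱼ)`. Averaging over the reorderings inside each arm, the sum over all
ways to fill both arms is therefore `C(n, i) / ∏_{j ≠ p} (z_p - z_j)`. Finally
`∑ₚ z_pⁿ / ∏_{j ≠ p} (z_p - z_j) = 1`, the leading coefficient of the Lagrange interpolation of
`Xⁿ` at the `n + 1` nodes `zⱼ`. -/

open Finset
open Equiv (Perm)

section PathDenom

variable {R : Type*} [CommRing R]

def pathDenom {m : ℕ} (s : Fin (m + 1) → R) : R :=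
  ∏ j : Fin m, (s j.castSucc - s j.succ)

lemma pathDenom_cons {m : ℕ} (t : R) (s : Fin (m + 1) → R) :
    pathDenom (Fin.cons t s) = (t - s 0) * pathDenom s := by
  rw [pathDenom, pathDenom, Fin.prod_univ_succ]
  simp

lemma map_pathDenom {S : Type*} [CommRing S] (φ : R →+* S) {m : ℕ} (s : Fin (m + 1) → R) :
    φ (pathDenom s) = pathDenom (φ ∘ s) := by
  simp [pathDenom]

lemma prod_pathEdges {n : ℕ} (s : Fin (n + 1) → R) :
    ∏ e ∈ pathEdges n, (s e.1 - s e.2) = pathDenom s := by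
  rw [pathEdges, prod_image fun a _ b _ h => Fin.castSucc_injective _ (congrArg Prod.fst h)]
  rfl

end PathDenom

lemma prod_succAbove_eq_prod_erase {M : Type*} [CommMonoid M] {m : ℕ} (f : Fin (m + 1) → M)
    (p : Fin (m + 1)) : ∏ j, f (p.succAbove j) = ∏ b ∈ univ.erase p, f b := by
  rw [← compl_singleton, ← Fin.image_succAbove_univ,
    prod_image fun _ _ _ _ h => Fin.succAbove_right_injective h]

lemma sum_sum_mul_eq_card_smul_sum {α ι M : Type*} [Fintype α] [DecidableEq α] [Fintype ι]
    [AddCommMonoid M] (g : ι → Perm α) (F : Perm α → M) :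
    ∑ τ, ∑ x, F (τ * g x) = Fintype.card ι • ∑ τ, F τ := by
  rw [sum_comm, ← card_univ, ← sum_const]
  exact sum_congr rfl fun x _ => Equiv.sum_comp (Equiv.mulRight (g x)) F

section Lagrange

variable {L : Type*} [Field L] {m : ℕ}

lemma sum_inv_sub_mul_inv_prod_succAbove (v : Fin (m + 1) → L) (hv : Function.Injective v)
    (t : L) (ht : ∀ p, t ≠ v p) :
    ∑ p, (t - v p)⁻¹ * (∏ j, (v p - v (p.succAbove j)))⁻¹ = (∏ p, (t - v p))⁻¹ := by
  have key := Lagrange.eval_interpolate_not_at_node (s := univ) (v := v) 1 (fun p _ => ht p)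
  rw [Lagrange.interpolate_one hv.injOn univ_nonempty, Polynomial.eval_one,
    Lagrange.eval_nodal] at key
  rw [← eq_inv_of_mul_eq_one_right key.symm]
  refine sum_congr rfl fun p _ => ?_
  rw [prod_succAbove_eq_prod_erase (fun b => v p - v b), Lagrange.nodalWeight, prod_inv_distrib,
    Pi.one_apply, mul_one, mul_comm]

lemma sum_pow_mul_inv_prod_succAbove (v : Fin (m + 1) → L) (hv : Function.Injective v) :
    ∑ p, v p ^ m * (∏ j, (v p - v (p.succAbove j)))⁻¹ = 1 := by
  have key := Lagrange.coeff_eq_sum (s := univ) hv.injOn (P := Polynomial.X ^ m)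
    (by rw [Polynomial.degree_X_pow, card_univ, Fintype.card_fin]; exact_mod_cast m.lt_succ_self)
  simp only [card_univ, Fintype.card_fin, add_tsub_cancel_right, Polynomial.coeff_X_pow_self,
    Polynomial.eval_pow, Polynomial.eval_X] at key
  rw [key]
  refine sum_congr rfl fun p _ => ?_
  rw [prod_succAbove_eq_prod_erase (fun b => v p - v b), div_eq_mul_inv]

end Lagrange

section SuccAbovePerm

variable {m : ℕ}

def succAbovePerm (q : Fin (m + 1)) (pτ : Fin (m + 1) × Perm (Fin m)) :
    Perm (Fin (m + 1)) :=
  (finSuccEquiv' q).trans (pτ.2.optionCongr.trans (finSuccEquiv' pτ.1).symm)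

@[simp]
lemma succAbovePerm_apply_self (q p : Fin (m + 1)) (τ : Perm (Fin m)) :
    succAbovePerm q (p, τ) q = p := by
  simp [succAbovePerm]

@[simp]
lemma succAbovePerm_apply_succAbove (q p : Fin (m + 1)) (τ : Perm (Fin m)) (a : Fin m) :
    succAbovePerm q (p, τ) (q.succAbove a) = p.succAbove (τ a) := by
  simp [succAbovePerm]

lemma succAbovePerm_bijective (q : Fin (m + 1)) : Function.Bijective (succAbovePerm q) := by
  rw [Fintype.bijective_iff_injective_and_card]
  refine ⟨fun ⟨p, τ⟩ ⟨p', τ'⟩ h => ?_, by simp [Fintype.card_perm, Nat.factorial_succ]⟩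
  obtain rfl : p = p' := by simpa using congrArg (· q) h
  refine Prod.ext rfl (Equiv.ext fun a => Fin.succAbove_right_injective (p := p) ?_)
  simpa using congrArg (· (q.succAbove a)) h

lemma sum_perm_eq_sum_succAbovePerm {M : Type*} [AddCommMonoid M] (q : Fin (m + 1))
    (f : Perm (Fin (m + 1)) → M) :
    ∑ σ, f σ = ∑ p, ∑ τ : Perm (Fin m), f (succAbovePerm q (p, τ)) := by
  rw [← (succAbovePerm_bijective q).sum_comp, Fintype.sum_prod_type]

lemma comp_succAbovePerm_zero {α : Type*} (v : Fin (m + 1) → α) (p : Fin (m + 1))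
    (τ : Perm (Fin m)) :
    v ∘ succAbovePerm 0 (p, τ) = Fin.cons (v p) ((v ∘ p.succAbove) ∘ τ) := by
  ext a
  cases a using Fin.cases with
  | zero => simp
  | succ a =>
    rw [Function.comp_apply, Fin.cons_succ, ← Fin.succAbove_zero, succAbovePerm_apply_succAbove]
    rfl

end SuccAbovePerm

section Arms

variable {n : ℕ}

/-- Positions of the two arms of the path `0 — ⋯ — n` hanging from the vertex `c`, read away
from `c`: the left arm `c - 1, …, 0` and the right arm `c + 1, …, n`, as indices of
`c.succAbove`. -/
def armEquiv (c : Fin (n + 1)) : Fin c ⊕ Fin (n - c) ≃ Fin n :=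
  (Equiv.sumCongr Fin.revPerm (Equiv.refl _)).trans
    (finSumFinEquiv.trans (finCongr (Nat.add_sub_cancel' c.is_le)))

@[simp]
lemma val_armEquiv_inl (c : Fin (n + 1)) (a : Fin c) :
    (armEquiv c (Sum.inl a) : ℕ) = c - 1 - a := by
  simp [armEquiv]
  omega

@[simp]
lemma val_armEquiv_inr (c : Fin (n + 1)) (b : Fin (n - c)) :
    (armEquiv c (Sum.inr b) : ℕ) = c + b := by
  simp [armEquiv]

lemma val_succAbove_armEquiv_inl (c : Fin (n + 1)) (a : Fin c) :
    (c.succAbove (armEquiv c (Sum.inl a)) : ℕ) = c - 1 - a := by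
  have hlt : (armEquiv c (Sum.inl a)).castSucc < c := by
    rw [Fin.lt_def, Fin.val_castSucc, val_armEquiv_inl]
    omega
  rw [Fin.succAbove_of_castSucc_lt _ _ hlt, Fin.val_castSucc, val_armEquiv_inl]

lemma val_succAbove_armEquiv_inr (c : Fin (n + 1)) (b : Fin (n - c)) :
    (c.succAbove (armEquiv c (Sum.inr b)) : ℕ) = c + 1 + b := by
  rw [Fin.succAbove_of_le_castSucc _ _ (Fin.le_def.2 (by simp)), Fin.val_succ, val_armEquiv_inr]
  omega

lemma pathDenom_eq_arms {R : Type*} [CommRing R] (u : Fin (n + 1) → R) (c : Fin (n + 1)) :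
    pathDenom u = (-1) ^ (c : ℕ) *
      pathDenom (Fin.cons (u c) (u ∘ c.succAbove ∘ armEquiv c ∘ Sum.inl)) *
      pathDenom (Fin.cons (u c) (u ∘ c.succAbove ∘ armEquiv c ∘ Sum.inr)) := by
  have hc := c.is_le
  have hleft : Fin.cons (u c) (u ∘ c.succAbove ∘ armEquiv c ∘ Sum.inl) =
      fun a : Fin (c + 1) => u ⟨c - a, by omega⟩ := by
    funext a
    cases a using Fin.cases with
    | zero => simp
    | succ a =>
      simp only [Fin.cons_succ, Function.comp_apply]
      exact congrArg u (Fin.ext (by simp [val_succAbove_armEquiv_inl]; omega))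
  have hright : Fin.cons (u c) (u ∘ c.succAbove ∘ armEquiv c ∘ Sum.inr) =
      fun b : Fin (n - c + 1) => u ⟨c + b, by omega⟩ := by
    funext b
    cases b using Fin.cases with
    | zero => simp
    | succ b =>
      simp only [Fin.cons_succ, Function.comp_apply]
      exact congrArg u (Fin.ext (by simp [val_succAbove_armEquiv_inr]; omega))
  rw [hleft, hright, pathDenom, pathDenom, pathDenom, ← (armEquiv c).prod_comp,
    Fintype.prod_sum_type]
  congr 1
  rw [show (-1 : R) ^ (c : ℕ) = (-1) ^ #(univ : Finset (Fin c)) by simp, ← prod_neg]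
  refine prod_congr rfl fun a _ => ?_
  rw [neg_sub]
  congr 2
  ext
  simp
  omega

end Arms

section PathSums

variable {L : Type*} [Field L]

theorem sum_perm_inv_pathDenom_cons {m : ℕ} (v : Fin m → L) (hv : Function.Injective v) (t : L)
    (ht : ∀ j, t ≠ v j) :
    ∑ ρ : Perm (Fin m), (pathDenom (Fin.cons t (v ∘ ρ)))⁻¹ = (∏ j, (t - v j))⁻¹ := by
  induction m generalizing t with
  | zero => simp [pathDenom]
  | succ m ih =>
    have hrest (p : Fin (m + 1)) :
        ∑ τ : Perm (Fin m), (pathDenom (Fin.cons (v p) ((v ∘ p.succAbove) ∘ τ)))⁻¹ =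
          (∏ j, (v p - v (p.succAbove j)))⁻¹ :=
      ih (v ∘ p.succAbove) (hv.comp Fin.succAbove_right_injective) (v p)
        fun j h => p.succAbove_ne j (hv h).symm
    rw [sum_perm_eq_sum_succAbovePerm 0, ← sum_inv_sub_mul_inv_prod_succAbove v hv t ht]
    refine sum_congr rfl fun p _ => ?_
    simp only [comp_succAbovePerm_zero, pathDenom_cons, Fin.cons_zero,
      mul_inv, ← mul_sum, hrest]

theorem sum_perm_inv_pathDenom_mul_inv_pathDenom [CharZero L] {k l m : ℕ}
    (e : Fin k ⊕ Fin l ≃ Fin m) (w : Fin m → L) (hw : Function.Injective w) (t : L)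
    (ht : ∀ j, t ≠ w j) :
    ∑ τ : Perm (Fin m), (pathDenom (Fin.cons t (w ∘ τ ∘ e ∘ Sum.inl)))⁻¹ *
        (pathDenom (Fin.cons t (w ∘ τ ∘ e ∘ Sum.inr)))⁻¹ =
      m.choose k * (∏ j, (t - w j))⁻¹ := by
  obtain rfl : k + l = m := by simpa using Fintype.card_congr e
  set F : Perm (Fin (k + l)) → L := fun τ =>
    (pathDenom (Fin.cons t (w ∘ τ ∘ e ∘ Sum.inl)))⁻¹ *
      (pathDenom (Fin.cons t (w ∘ τ ∘ e ∘ Sum.inr)))⁻¹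
  -- Permuting the vertices inside each arm does not change the sum, so the sum is the average of
  -- the products of the two single-arm sums.
  have hshift (ρ : Perm (Fin k)) (ρ' : Perm (Fin l)) (τ : Perm (Fin (k + l))) :
      F (τ * e.permCongr (ρ.sumCongr ρ')) =
        (pathDenom (Fin.cons t ((w ∘ τ ∘ e ∘ Sum.inl) ∘ ρ)))⁻¹ *
          (pathDenom (Fin.cons t ((w ∘ τ ∘ e ∘ Sum.inr) ∘ ρ')))⁻¹ := by
    simp only [F]
    congr 4 <;> ext <;> simp [Equiv.permCongr_apply]
  have hinj (ι : Type) (f : ι → Fin (k + l)) (hf : Function.Injective f) (τ : Perm _) :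
      Function.Injective (w ∘ τ ∘ f) := hw.comp (τ.injective.comp hf)
  have hchoose : ((k + l).choose k * k.factorial * l.factorial : L) = (k + l).factorial := by
    exact_mod_cast by simpa using Nat.choose_mul_factorial_mul_factorial (Nat.le_add_right k l)
  have hfact : (k.factorial * l.factorial : L) ≠ 0 := by simp [Nat.factorial_ne_zero]
  refine mul_left_cancel₀ hfact ?_
  calc (k.factorial * l.factorial : L) * ∑ τ, F τ
      = ∑ τ, ∑ ρρ' : Perm (Fin k) × Perm (Fin l), F (τ * e.permCongr (ρρ'.1.sumCongr ρρ'.2)) := by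
        rw [sum_sum_mul_eq_card_smul_sum, Fintype.card_prod, Fintype.card_perm, Fintype.card_perm,
          Fintype.card_fin, Fintype.card_fin, nsmul_eq_mul, Nat.cast_mul]
    _ = ∑ τ : Perm (Fin (k + l)), (∏ j, (t - w j))⁻¹ := by
        refine sum_congr rfl fun τ _ => ?_
        rw [Fintype.sum_prod_type]
        have hsplit : (∏ a, (t - (w ∘ τ ∘ e ∘ Sum.inl) a)) * ∏ b, (t - (w ∘ τ ∘ e ∘ Sum.inr) b) =
            ∏ j, (t - w j) := by
          rw [← Equiv.prod_comp τ, ← Equiv.prod_comp e, Fintype.prod_sum_type]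
          rfl
        simp only [hshift]
        rw [← sum_mul_sum,
          sum_perm_inv_pathDenom_cons _ (hinj _ _ (e.injective.comp Sum.inl_injective) τ) t
            fun _ => ht _,
          sum_perm_inv_pathDenom_cons _ (hinj _ _ (e.injective.comp Sum.inr_injective) τ) t
            fun _ => ht _, ← mul_inv, hsplit]
    _ = (k.factorial * l.factorial : L) * ((k + l).choose k * (∏ j, (t - w j))⁻¹) := by
        rw [sum_const, card_univ, Fintype.card_perm, Fintype.card_fin, nsmul_eq_mul, ← hchoose]
        ring

theorem sum_perm_pow_mul_inv_pathDenom [CharZero L] {n : ℕ} (z : Fin (n + 1) → L)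
    (hz : Function.Injective z) (c : Fin (n + 1)) :
    ∑ σ : Perm (Fin (n + 1)), z (σ c) ^ n * (pathDenom (z ∘ σ))⁻¹ =
      (-1) ^ (c : ℕ) * n.choose c := by
  have hfiber (p : Fin (n + 1)) :
      ∑ τ : Perm (Fin n),
          z (succAbovePerm c (p, τ) c) ^ n * (pathDenom (z ∘ succAbovePerm c (p, τ)))⁻¹ =
        (-1) ^ (c : ℕ) * n.choose c * (z p ^ n * (∏ j, (z p - z (p.succAbove j)))⁻¹) := by
    set w := z ∘ p.succAbove
    have hw : Function.Injective w := hz.comp Fin.succAbove_right_injective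
    have hrelabel {ι : Type} (f : ι → Fin n) (τ : Perm (Fin n)) :
        (z ∘ succAbovePerm c (p, τ)) ∘ c.succAbove ∘ f = w ∘ τ ∘ f := by
      ext
      simp [w]
    calc _ = ∑ τ : Perm (Fin n), (-1) ^ (c : ℕ) * z p ^ n *
            ((pathDenom (Fin.cons (z p) (w ∘ τ ∘ armEquiv c ∘ Sum.inl)))⁻¹ *
              (pathDenom (Fin.cons (z p) (w ∘ τ ∘ armEquiv c ∘ Sum.inr)))⁻¹) := by
          refine sum_congr rfl fun τ _ => ?_
          rw [pathDenom_eq_arms, hrelabel, hrelabel, Function.comp_apply,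
            succAbovePerm_apply_self, mul_inv, mul_inv, ← inv_pow, inv_neg, inv_one]
          ring
      _ = _ := by
          rw [← mul_sum, sum_perm_inv_pathDenom_mul_inv_pathDenom (armEquiv c) w hw (z p)
            fun j h => p.succAbove_ne j (hz h).symm]
          simp only [w, Function.comp_apply]
          ring
  rw [sum_perm_eq_sum_succAbovePerm c, sum_congr rfl fun p _ => hfiber p, ← mul_sum,
    sum_pow_mul_inv_prod_succAbove z hz, mul_one]

end PathSums

/-- Lemma 2: for the path `G` on `x_0, …, x_n` and `Φ = DS_G`,
`Φ(x_i^n) = (−1)^i · C(n, i)` for every `0 ≤ i ≤ n`. -/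
theorem divided_symmetrization_path_power {K : Type*} [Field K] [CharZero K] (n : ℕ)
    (i : Fin (n + 1)) :
    DS (pathEdges n) ((X i : MvPolynomial (Fin (n + 1)) K) ^ n) =
      ((((-1) ^ (i : ℕ) * n.choose (i : ℕ) : ℤ)) :
        FractionRing (MvPolynomial (Fin (n + 1)) K)) := by
  set φ := algebraMap (MvPolynomial (Fin (n + 1)) K) (FractionRing (MvPolynomial (Fin (n + 1)) K))
  set z := fun j => φ (X j)
  have hz : Function.Injective z := fun a b h => X_injective (IsFractionRing.injective _ _ h)
  have hterm (σ : Perm (Fin (n + 1))) :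
      φ (rename σ (X i ^ n)) / φ (rename σ (∏ e ∈ pathEdges n, (X e.1 - X e.2))) =
        z (σ i) ^ n * (pathDenom (z ∘ σ))⁻¹ := by
    simp only [map_pow, rename_X, map_prod, map_sub, prod_pathEdges (fun j => X (σ j)),
      map_pathDenom, div_eq_mul_inv]
    rfl
  rw [DS, sum_congr rfl fun σ _ => hterm σ, sum_perm_pow_mul_inv_pathDenom z hz i]
  push_cast
  rfl
end

section
/- Let G be the path on the ordered variable set V = {x_0, x_1, ..., x_n} with edges (x_i, x_{i+1}), 0 ≤ i ≤ n−1, and let Φ = DS_G. Set y_i = x_0 + x_1 + ... + x_i. Then Φ(y_0 · y_1 · ... · y_{n−1}) = n!. -/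
open MvPolynomial

/-!
Everything is evaluated at a point `z` with distinct coordinates. If `deg g` is smaller than
the number of edges, `Φ(g) = 0`: multiplying numerator and denominator by the missing factors
`x_i - x_j`, `i < j`, turns each denominator into `± sign σ` times the Vandermonde product, so
`Φ(g)` becomes an alternant of a polynomial of degree below `N choose 2`, which vanishes.

For the induction step put `h = y_0 ⋯ y_{m-1}` on the path `x_0, …, x_{m+1}` and
`c_k = Φ(h x_k)`, so that `Φ(y_0 ⋯ y_m) = c_0 + ⋯ + c_m`. Then `Σ_k c_k = 0`, since
`x_0 + ⋯ + x_{m+1}` is symmetric and `deg h < m + 1`. The factor `x_q - x_{q+1}` cancels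
the edge `(q, q+1)`. For `q < m` this splits off the tail `x_{q+1}, …, x_{m+1}`, on which `h` has
degree `m - 1 - q`, one less than the number of tail edges; summing over the permutations of the
tail gives `c_q = c_{q+1}`. For `q = m` the vertex `x_{m+1}` becomes isolated, and induction
gives `c_m - c_{m+1} = (m + 2) m!`. Hence `c_0 = ⋯ = c_m = m!`.
-/

open Finset Equiv

theorem choose_two_le_sum_of_injective {N : ℕ} (d : Fin N → ℕ) (hd : Function.Injective d) :
    N.choose 2 ≤ ∑ i, d i := by
  have hd' : Function.Injective fun i => (d i : ℤ) := Nat.cast_injective.comp hd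
  have h := sum_range_le_sum (s := univ.image fun i => (d i : ℤ)) (c := 0) (by simp)
  rw [card_image_of_injective _ hd', card_univ, Fintype.card_fin,
    sum_image fun i _ j _ h => hd' h] at h
  simp only [zero_add] at h
  rw [Nat.choose_two_right, ← sum_range_id]
  zify
  exact_mod_cast h

theorem MvPolynomial.totalDegree_prod_le_card {σ R ι : Type*} [CommSemiring R] (s : Finset ι)
    (f : ι → MvPolynomial σ R) (hf : ∀ i ∈ s, (f i).totalDegree ≤ 1) :
    (∏ i ∈ s, f i).totalDegree ≤ #s :=
  (totalDegree_finsetProd _ _).trans (card_eq_sum_ones s ▸ sum_le_sum hf)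

theorem card_nsmul_sum_eq_sum_sum_mul {G T M : Type*} [Group G] [Fintype G] [Fintype T]
    [AddCommMonoid M] (F : G → M) (φ : T → G) :
    Fintype.card T • ∑ g, F g = ∑ g, ∑ t, F (g * φ t) :=
  calc Fintype.card T • ∑ g, F g = ∑ t : T, ∑ g, F g := by simp
    _ = ∑ t, ∑ g, F (g * φ t) :=
      sum_congr rfl fun t _ => (Equiv.sum_comp (Equiv.mulRight (φ t)) F).symm
    _ = _ := sum_comm

theorem sum_Iic_castAdd_append {M : Type*} [AddCommMonoid M] {a b : ℕ} (u : Fin a → M)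
    (w : Fin b → M) (k : Fin a) :
    ∑ i ∈ Iic (Fin.castAdd b k), Fin.append u w i = ∑ i ∈ Iic k, u i := by
  rw [← Fin.map_castAddEmb_Iic, sum_map]
  simp

theorem sum_Iic_natAdd_append {M : Type*} [AddCommMonoid M] {a b : ℕ} (u : Fin a → M)
    (w : Fin b → M) (k : Fin b) :
    ∑ i ∈ Iic (Fin.natAdd a k), Fin.append u w i = ∑ i, u i + ∑ i ∈ Iic k, w i := by
  rw [← filter_ge_eq_Iic, sum_filter, Fin.sum_univ_add, ← filter_ge_eq_Iic, sum_filter]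
  congr 1
  · refine sum_congr rfl fun i _ => ?_
    rw [if_pos (by simp [Fin.le_def]; omega), Fin.append_left]
  · simp

section Alternant

variable {R : Type*} [CommRing R] {N : ℕ}

theorem sum_sign_smul_prod_pow_eq_zero (w : Fin N → R) (d : Fin N → ℕ)
    (hd : ∑ i, d i < N.choose 2) :
    ∑ σ : Perm (Fin N), Perm.sign σ • ∏ i, w (σ i) ^ d i = 0 := by
  obtain ⟨i, j, hij, hne⟩ : ∃ i j, d i = d j ∧ i ≠ j := by
    by_contra! h
    exact hd.not_ge (choose_two_le_sum_of_injective d fun i j => h i j)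
  have := Matrix.det_zero_of_column_eq (M := Matrix.of fun k l => w k ^ d l) hne (by simp [hij])
  rwa [Matrix.det_apply] at this

theorem sum_sign_smul_eval_comp_eq_zero (w : Fin N → R) (g : MvPolynomial (Fin N) R)
    (hg : g.totalDegree < N.choose 2) :
    ∑ σ : Perm (Fin N), Perm.sign σ • eval (w ∘ σ) g = 0 := by
  conv_lhs => rw [g.as_sum]
  simp only [map_sum, eval_monomial, Finsupp.prod_fintype _ _ (fun _ => pow_zero _), smul_sum]
  rw [sum_comm]
  refine sum_eq_zero fun d hd => ?_
  simp only [Function.comp_apply, ← mul_smul_comm, ← mul_sum]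
  refine mul_eq_zero_of_right _ (sum_sign_smul_prod_pow_eq_zero w d (lt_of_le_of_lt ?_ hg))
  simpa [Finsupp.sum_fintype] using le_totalDegree hd

theorem prod_lt_pairs_sub_comp_perm (w : Fin N → R) (σ : Perm (Fin N)) :
    ∏ e ∈ ({e | e.1 < e.2} : Finset (Fin N × Fin N)), (w (σ e.1) - w (σ e.2)) =
      Perm.sign σ • ∏ e ∈ ({e | e.1 < e.2} : Finset (Fin N × Fin N)), (w e.1 - w e.2) := by
  have key (v : Fin N → R) :
      ∏ e ∈ ({e | e.1 < e.2} : Finset (Fin N × Fin N)), (v e.1 - v e.2) =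
        (-1) ^ N.choose 2 * (Matrix.vandermonde v).det := by
    have hcard := Fintype.card_product_filter_lt (α := Fin N)
    rw [Fintype.card_fin] at hcard
    have hV : ∏ i, ∏ j ∈ Ioi i, (v j - v i) =
        ∏ e ∈ ({e | e.1 < e.2} : Finset (Fin N × Fin N)), (v e.2 - v e.1) := by
      rw [prod_filter, Fintype.prod_prod_type]
      refine prod_congr rfl fun i _ => ?_
      rw [← prod_filter, filter_lt_eq_Ioi]
    rw [Matrix.det_vandermonde, hV, ← hcard, ← prod_const, ← prod_mul_distrib]
    simp only [neg_one_mul, neg_sub]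
  have hperm : Matrix.vandermonde (w ∘ σ) = (Matrix.vandermonde w).submatrix σ id := by
    ext; simp [Matrix.vandermonde]
  have hσ := key (w ∘ σ)
  simp only [Function.comp_apply] at hσ
  rw [hσ, hperm, Matrix.det_permute, key, Units.smul_def, zsmul_eq_mul]
  ring

end Alternant

section DivSymm

variable {L : Type*} [Field L] {N : ℕ}

noncomputable def edgeQuot (E : Finset (Fin N × Fin N)) (g : MvPolynomial (Fin N) L)
    (v : Fin N → L) : L :=
  eval v g / ∏ e ∈ E, (v e.1 - v e.2)

/-- `DS E g` evaluated at the point `z`; see `DS_eq_divSymm` for the generic point. -/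
noncomputable def divSymm (E : Finset (Fin N × Fin N)) (g : MvPolynomial (Fin N) L)
    (z : Fin N → L) : L :=
  ∑ σ : Perm (Fin N), edgeQuot E g (z ∘ σ)

theorem divSymm_eq_zero_of_totalDegree_lt {E : Finset (Fin N × Fin N)}
    (hE : ∀ e ∈ E, e.1 < e.2) {z : Fin N → L} (hz : Function.Injective z)
    {g : MvPolynomial (Fin N) L} (hg : g.totalDegree < #E) : divSymm E g z = 0 := by
  set P : Finset (Fin N × Fin N) := {e | e.1 < e.2}
  have hEP : E ⊆ P := fun e he => by simpa [P] using hE e he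
  set NE : MvPolynomial (Fin N) L := ∏ e ∈ P \ E, (X e.1 - X e.2)
  set Δ : L := ∏ e ∈ P, (z e.1 - z e.2)
  have hΔ : Δ ≠ 0 := prod_ne_zero_iff.2 fun e he =>
    sub_ne_zero.2 fun h => (by simpa [P] using he : e.1 < e.2).ne (hz h)
  have hsign (σ : Perm (Fin N)) : Perm.sign σ • Δ ≠ 0 := by
    rcases Int.units_eq_one_or (Perm.sign σ) with h | h <;> simp [h, hΔ]
  have hterm (σ : Perm (Fin N)) :
      edgeQuot E g (z ∘ σ) = Perm.sign σ • eval (z ∘ σ) (g * NE) / Δ := by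
    have hsplit :
        (∏ e ∈ E, (z (σ e.1) - z (σ e.2))) * eval (z ∘ σ) NE = Perm.sign σ • Δ := by
      simp only [NE, map_prod, map_sub, eval_X, Function.comp_apply]
      rw [mul_comm, prod_sdiff hEP, prod_lt_pairs_sub_comp_perm]
    have hNE : eval (z ∘ σ) NE ≠ 0 := right_ne_zero_of_mul (hsplit ▸ hsign σ)
    rw [edgeQuot, map_mul, ← mul_div_mul_right _ _ hNE]
    simp only [Function.comp_apply]
    rw [hsplit]
    rcases Int.units_eq_one_or (Perm.sign σ) with h | h <;> simp [h, neg_div, div_neg]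
  have hdeg : (g * NE).totalDegree < N.choose 2 := by
    have hP : #P = N.choose 2 := by simpa using Fintype.card_product_filter_lt (α := Fin N)
    have : NE.totalDegree ≤ #(P \ E) :=
      totalDegree_prod_le_card _ _ fun e _ => (totalDegree_sub _ _).trans (by simp)
    have := card_sdiff_of_subset hEP
    have := card_le_card hEP
    have := totalDegree_mul g NE
    omega
  rw [divSymm, sum_congr rfl fun σ _ => hterm σ, ← sum_div,
    sum_sign_smul_eval_comp_eq_zero _ _ hdeg, zero_div]

theorem divSymm_sub (E : Finset (Fin N × Fin N)) (g₁ g₂ : MvPolynomial (Fin N) L)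
    (z : Fin N → L) : divSymm E (g₁ - g₂) z = divSymm E g₁ z - divSymm E g₂ z := by
  simp only [divSymm, edgeQuot, map_sub, sub_div, sum_sub_distrib]

theorem divSymm_sum {ι : Type*} (s : Finset ι) (E : Finset (Fin N × Fin N))
    (g : ι → MvPolynomial (Fin N) L) (z : Fin N → L) :
    divSymm E (∑ i ∈ s, g i) z = ∑ i ∈ s, divSymm E (g i) z := by
  simp only [divSymm, edgeQuot, map_sum, sum_div]
  exact sum_comm

theorem divSymm_mul_of_isSymmetric (E : Finset (Fin N × Fin N)) (g : MvPolynomial (Fin N) L)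
    {p : MvPolynomial (Fin N) L} (hp : p.IsSymmetric) (z : Fin N → L) :
    divSymm E (g * p) z = eval z p * divSymm E g z := by
  simp only [divSymm, edgeQuot, mul_sum, map_mul]
  refine sum_congr rfl fun σ _ => ?_
  rw [← eval_rename (p := p), hp σ, mul_comm, mul_div_assoc]

theorem divSymm_insert_mul_X_sub_X {E : Finset (Fin N × Fin N)} {a b : Fin N} (hab : a ≠ b)
    (hE : (a, b) ∉ E) {z : Fin N → L} (hz : Function.Injective z) (g : MvPolynomial (Fin N) L) :
    divSymm (insert (a, b) E) (g * (X a - X b)) z = divSymm E g z := by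
  refine sum_congr rfl fun σ _ => ?_
  have hne : z (σ a) - z (σ b) ≠ 0 := sub_ne_zero.2 fun h => hab (σ.injective (hz h))
  rw [edgeQuot, edgeQuot, prod_insert hE, map_mul]
  simp only [map_sub, eval_X, Function.comp_apply]
  rw [mul_comm (z _ - _), mul_div_mul_right _ _ hne]

theorem factorial_mul_divSymm_map_rename {t : ℕ} (ι : Fin t ↪ Fin N)
    (E : Finset (Fin t × Fin t)) (g : MvPolynomial (Fin t) L) (z : Fin N → L) :
    (t.factorial : L) * divSymm (E.map (ι.prodMap ι)) (rename ι g) z =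
      ∑ σ : Perm (Fin N), divSymm E g (z ∘ σ ∘ ι) := by
  have h := card_nsmul_sum_eq_sum_sum_mul
    (fun σ : Perm (Fin N) => edgeQuot (E.map (ι.prodMap ι)) (rename ι g) (z ∘ σ))
    (fun τ : Perm (Fin t) => τ.viaFintypeEmbedding ι)
  rw [Fintype.card_perm, Fintype.card_fin, nsmul_eq_mul] at h
  rw [divSymm, h]
  refine sum_congr rfl fun σ _ => sum_congr rfl fun τ _ => ?_
  simp [edgeQuot, eval_rename, Function.comp_def, Perm.viaFintypeEmbedding_apply_image]

end DivSymm

section Path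

theorem prod_pathEdges_s11 {M : Type*} [CommMonoid M] (n : ℕ) (f : Fin (n + 1) × Fin (n + 1) → M) :
    ∏ e ∈ pathEdges n, f e = ∏ i : Fin n, f (i.castSucc, i.succ) :=
  prod_image fun _ _ _ _ h => Fin.castSucc_injective _ (congrArg Prod.fst h)

theorem card_pathEdges (n : ℕ) : #(pathEdges n) = n := by
  rw [pathEdges,
    card_image_of_injective _ fun _ _ h => Fin.castSucc_injective _ (congrArg Prod.fst h)]
  simp

theorem lt_of_mem_pathEdges {n : ℕ} {e : Fin (n + 1) × Fin (n + 1)} (he : e ∈ pathEdges n) :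
    e.1 < e.2 := by
  obtain ⟨i, -, rfl⟩ := mem_image.1 he
  exact Fin.castSucc_lt_succ

theorem pathEdges_succ (n : ℕ) :
    pathEdges (n + 1) = insert ((Fin.last n).castSucc, Fin.last (n + 1))
      ((pathEdges n).map (Fin.castSuccEmb.prodMap Fin.castSuccEmb)) := by
  ext ⟨a, b⟩
  simp [pathEdges, Fin.exists_fin_succ']
  exact or_comm.trans (or_congr_left (and_congr eq_comm eq_comm))

theorem prod_pathEdges_append {R : Type*} [CommRing R] (q r : ℕ) (u : Fin (q + 1) → R)
    (w : Fin (r + 2) → R) :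
    ∏ e ∈ pathEdges (q + 1 + r + 1), (Fin.append u w e.1 - Fin.append u w e.2) =
      (∏ e ∈ pathEdges q, (u e.1 - u e.2)) * (u (Fin.last q) - w 0) *
        ∏ e ∈ pathEdges (r + 1), (w e.1 - w e.2) := by
  have hsucc (i : Fin q) : (Fin.castAdd (r + 1) i.castSucc).succ = Fin.castAdd (r + 2) i.succ :=
    Fin.ext (by simp)
  have hlast : (Fin.castAdd (r + 1) (Fin.last q)).succ = Fin.natAdd (q + 1) (0 : Fin (r + 2)) :=
    Fin.ext (by simp)
  simp only [prod_pathEdges_s11]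
  refine (Fin.prod_univ_add (a := q + 1) (b := r + 1)
    fun i => Fin.append u w i.castSucc - Fin.append u w i.succ).trans ?_
  rw [Fin.prod_univ_castSucc]
  simp only [Fin.castSucc_castAdd, hsucc, hlast, ← Fin.natAdd_castSucc, Fin.succ_natAdd,
    Fin.append_left, Fin.append_right]

variable {L : Type*} [Field L]

theorem eval_pathY (n : ℕ) (v : Fin (n + 1) → L) (k : Fin (n + 1)) :
    eval v (pathY n L k) = ∑ i ∈ Iic k, v i := by
  simp [pathY]

theorem totalDegree_pathY_le (n : ℕ) (k : Fin (n + 1)) : (pathY n L k).totalDegree ≤ 1 :=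
  (totalDegree_finsetSum _ _).trans (Finset.sup_le fun i _ => (totalDegree_X i).le)

theorem rename_castSucc_pathY (n : ℕ) (k : Fin (n + 1)) :
    rename Fin.castSucc (pathY n L k) = pathY (n + 1) L k.castSucc := by
  rw [pathY, pathY, map_sum, ← Fin.map_castSuccEmb_Iic, sum_map]
  simp

theorem pathY_last (n : ℕ) : pathY n L (Fin.last n) = ∑ i, X i := by
  rw [pathY, ← Fin.top_eq_last, Iic_top]

theorem eval_append_prod_pathY (q r : ℕ) (u : Fin (q + 1) → L) (w : Fin (r + 2) → L) :
    eval (Fin.append u w)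
        (∏ k : Fin (q + 1 + r), pathY (q + 1 + r + 1) L k.castSucc.castSucc) =
      eval u (∏ k : Fin (q + 1), pathY q L k) *
        eval w (∏ k : Fin r, (C (∑ i, u i) + pathY (r + 1) L k.castSucc.castSucc)) := by
  rw [Fin.prod_univ_add, map_mul]
  congr 1
  · rw [map_prod, map_prod]
    refine prod_congr rfl fun k _ => (eval_pathY (L := L) _ _ _).trans ?_
    rw [eval_pathY]
    exact sum_Iic_castAdd_append u w k
  · simp only [map_prod, map_add, eval_C]
    refine prod_congr rfl fun k _ => (eval_pathY (L := L) _ _ _).trans ?_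
    rw [eval_pathY, ← Fin.natAdd_castSucc, ← Fin.natAdd_castSucc]
    exact sum_Iic_natAdd_append u w _

theorem edgeQuot_pathEdges_append (q r : ℕ) (u : Fin (q + 1) → L) (w : Fin (r + 2) → L)
    (hne : u (Fin.last q) ≠ w 0) :
    edgeQuot (N := q + 1 + (r + 2)) (pathEdges (q + 1 + r + 1))
        ((∏ k : Fin (q + 1 + r), pathY (q + 1 + r + 1) L k.castSucc.castSucc) *
          (X (Fin.castAdd (r + 2) (Fin.last q)) - X (Fin.natAdd (q + 1) 0))) (Fin.append u w) =
      edgeQuot (pathEdges q) (∏ k : Fin (q + 1), pathY q L k) u *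
        edgeQuot (pathEdges (r + 1))
          (∏ k : Fin r, (C (∑ i, u i) + pathY (r + 1) L k.castSucc.castSucc)) w := by
  have hX : eval (Fin.append u w) (X (Fin.castAdd (r + 2) (Fin.last q)) -
      X (Fin.natAdd (q + 1) 0) : MvPolynomial (Fin (q + 1 + (r + 2))) L) =
        u (Fin.last q) - w 0 := by
    simp
  rw [edgeQuot, map_mul, eval_append_prod_pathY, hX]
  -- `Fin (q + 1 + r + 1 + 1)` and `Fin (q + 1 + (r + 2))` agree only up to unfolding
  erw [prod_pathEdges_append]
  rw [mul_right_comm _ (_ - _), mul_div_mul_right _ _ (sub_ne_zero.2 hne), edgeQuot, edgeQuot,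
    div_mul_div_comm]

theorem divSymm_pathEdges_mul_X_sub_X_eq_zero [CharZero L] {m q : ℕ} (hq : q < m)
    {z : Fin (m + 2) → L} (hz : Function.Injective z) :
    divSymm (pathEdges (m + 1)) ((∏ k : Fin m, pathY (m + 1) L k.castSucc.castSucc) *
      (X ⟨q, by omega⟩ - X ⟨q + 1, by omega⟩)) z = 0 := by
  obtain ⟨r, rfl⟩ : ∃ r, m = q + 1 + r := ⟨m - (q + 1), by omega⟩
  set ι : Fin (r + 2) ↪ Fin (q + 1 + (r + 2)) := Fin.natAddEmb (q + 1)
  set g : MvPolynomial (Fin (q + 1 + r + 2)) L :=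
    (∏ k : Fin (q + 1 + r), pathY (q + 1 + r + 1) L k.castSucc.castSucc) *
      (X ⟨q, by omega⟩ - X ⟨q + 1, by omega⟩)
  set F : Perm (Fin (q + 1 + r + 2)) → L := fun σ => edgeQuot (pathEdges _) g (z ∘ σ)
  have hcoset (σ : Perm (Fin (q + 1 + r + 2))) :
      ∑ τ : Perm (Fin (r + 2)), F (σ * τ.viaFintypeEmbedding ι) = 0 := by
    set u : Fin (q + 1) → L := z ∘ σ ∘ Fin.castAdd (r + 2)
    set w : Fin (r + 2) → L := z ∘ σ ∘ ι
    have hw : Function.Injective w := hz.comp (σ.injective.comp ι.injective)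
    have happend (τ : Perm (Fin (r + 2))) :
        z ∘ ⇑(σ * τ.viaFintypeEmbedding ι) = Fin.append u (w ∘ τ) := by
      funext i
      refine Fin.addCases (m := q + 1) (n := r + 2) (fun a => ?_) (fun b => ?_) i
      · have ha : Fin.castAdd (r + 2) a ∉ Set.range ι := by
          rintro ⟨b, hb⟩
          have := congrArg Fin.val hb
          simp [ι] at this
          omega
        rw [Function.comp_apply, Perm.mul_apply,
          Perm.viaFintypeEmbedding_apply_notMem_range _ _ ha, Fin.append_left]
        rfl
      · have := Perm.viaFintypeEmbedding_apply_image τ ι b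
        simp only [ι, Fin.natAddEmb_apply] at this
        simp [this, w, ι]
    have hne (τ : Perm (Fin (r + 2))) : u (Fin.last q) ≠ (w ∘ τ) 0 := fun h => by
      have := congrArg Fin.val (σ.injective (hz h))
      simp [ι] at this
      omega
    calc ∑ τ : Perm (Fin (r + 2)), F (σ * τ.viaFintypeEmbedding ι)
        = ∑ τ : Perm (Fin (r + 2)), edgeQuot (pathEdges q) (∏ k : Fin (q + 1), pathY q L k) u *
            edgeQuot (pathEdges (r + 1))
              (∏ k : Fin r, (C (∑ i, u i) + pathY (r + 1) L k.castSucc.castSucc)) (w ∘ τ) :=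
          sum_congr rfl fun τ _ => (congrArg _ (happend τ)).trans
            (edgeQuot_pathEdges_append q r u (w ∘ τ) (hne τ))
      _ = 0 := by
        rw [← mul_sum, ← divSymm.eq_def, divSymm_eq_zero_of_totalDegree_lt
          (fun _ => lt_of_mem_pathEdges) hw, mul_zero]
        refine (totalDegree_prod_le_card _ _ fun k _ => ?_).trans_lt ?_
        · exact (totalDegree_add _ _).trans
            (max_le ((totalDegree_C _).trans_le zero_le_one) (totalDegree_pathY_le _ _))
        · simp [card_pathEdges]
  have h := card_nsmul_sum_eq_sum_sum_mul F fun τ : Perm (Fin (r + 2)) => τ.viaFintypeEmbedding ι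
  rw [sum_congr rfl fun σ _ => hcoset σ, sum_const_zero, smul_eq_zero] at h
  exact h.resolve_left Fintype.card_ne_zero

theorem divSymm_pathEdges_mul_X_sub_X_last [CharZero L] {m : ℕ}
    (ih : ∀ w : Fin (m + 1) → L, Function.Injective w →
      divSymm (pathEdges m) (∏ k : Fin m, pathY m L k.castSucc) w = m.factorial)
    {z : Fin (m + 2) → L} (hz : Function.Injective z) :
    divSymm (pathEdges (m + 1)) ((∏ k : Fin m, pathY (m + 1) L k.castSucc.castSucc) *
      (X (Fin.last m).castSucc - X (Fin.last (m + 1)))) z = (m + 2) * m.factorial := by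
  have hres := factorial_mul_divSymm_map_rename Fin.castSuccEmb (pathEdges m)
    (∏ k : Fin m, pathY m L k.castSucc) z
  rw [sum_congr rfl fun σ _ => ih _ (hz.comp (σ.injective.comp (Fin.castSucc_injective _))),
    sum_const, card_univ, Fintype.card_perm, Fintype.card_fin, nsmul_eq_mul] at hres
  have hh : ∏ k : Fin m, pathY (m + 1) L k.castSucc.castSucc =
      rename Fin.castSucc (∏ k : Fin m, pathY m L k.castSucc) := by
    simp [rename_castSucc_pathY]
  rw [pathEdges_succ, divSymm_insert_mul_X_sub_X (Fin.castSucc_lt_last _).ne (by simp) hz, hh]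
  refine mul_left_cancel₀ (Nat.cast_ne_zero.2 (m + 1).factorial_ne_zero) (hres.trans ?_)
  rw [Nat.factorial_succ (m + 1)]
  push_cast
  ring

theorem divSymm_pathEdges_prod_pathY_eq_factorial [CharZero L] (m : ℕ) {z : Fin (m + 1) → L}
    (hz : Function.Injective z) :
    divSymm (pathEdges m) (∏ k : Fin m, pathY m L k.castSucc) z = m.factorial := by
  induction m with
  | zero => simp [divSymm, edgeQuot, pathEdges]
  | succ m ih =>
    set h : MvPolynomial (Fin (m + 2)) L := ∏ k : Fin m, pathY (m + 1) L k.castSucc.castSucc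
    set c : Fin (m + 2) → L := fun k => divSymm (pathEdges (m + 1)) (h * X k) z
    have hT : divSymm (pathEdges (m + 1)) (∏ k : Fin (m + 1), pathY (m + 1) L k.castSucc) z =
        ∑ k : Fin (m + 1), c k.castSucc := by
      rw [Fin.prod_univ_castSucc, ← rename_castSucc_pathY, pathY_last, map_sum, mul_sum,
        divSymm_sum]
      simp [c, h, rename_X]
    have hsum : ∑ k, c k = 0 := by
      rw [← divSymm_sum, ← mul_sum, ← esymm_one,
        divSymm_mul_of_isSymmetric _ _ (esymm_isSymmetric _ _ 1),
        divSymm_eq_zero_of_totalDegree_lt (fun _ => lt_of_mem_pathEdges) hz, mul_zero]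
      exact (totalDegree_prod_le_card _ _ fun k _ => totalDegree_pathY_le _ _).trans_lt
        (by simp [card_pathEdges])
    have hlast : c (Fin.last m).castSucc - c (Fin.last (m + 1)) = (m + 2) * m.factorial := by
      rw [← divSymm_sub, ← mul_sub]
      exact divSymm_pathEdges_mul_X_sub_X_last (fun w hw => ih hw) hz
    have hstep (q : ℕ) (hq : q < m) : c ⟨q, by omega⟩ = c ⟨q + 1, by omega⟩ := by
      rw [← sub_eq_zero, ← divSymm_sub, ← mul_sub]
      exact divSymm_pathEdges_mul_X_sub_X_eq_zero hq hz
    have hconst (k : Fin (m + 1)) : c k.castSucc = c 0 := by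
      induction k using Fin.induction with
      | zero => rfl
      | succ k ihk => exact (hstep k k.isLt).symm.trans ihk
    rw [Fin.sum_univ_castSucc, sum_congr rfl fun k _ => hconst k] at hsum
    rw [hconst] at hlast
    rw [hT, sum_congr rfl fun k _ => hconst k]
    simp only [sum_const, card_univ, Fintype.card_fin, nsmul_eq_mul] at hsum ⊢
    push_cast at hsum ⊢
    have hc : c 0 = m.factorial := by
      refine mul_left_cancel₀ (show (m + 2 : L) ≠ 0 by exact_mod_cast (m + 1).succ_ne_zero) ?_
      linear_combination hsum + hlast
    rw [hc, Nat.factorial_succ]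
    push_cast
    ring

end Path

theorem MvPolynomial.algebraMap_rename_eq_eval_map {σ K A : Type*} [CommSemiring K]
    [CommSemiring A] [Algebra K A] [Algebra (MvPolynomial σ K) A]
    [IsScalarTower K (MvPolynomial σ K) A] (π : σ → σ) (f : MvPolynomial σ K) :
    algebraMap (MvPolynomial σ K) A (rename π f) =
      eval (fun i => algebraMap (MvPolynomial σ K) A (X (π i))) (map (algebraMap K A) f) := by
  induction f using MvPolynomial.induction_on with
  | C a => simp [IsScalarTower.algebraMap_apply K (MvPolynomial σ K)]
  | add p q hp hq => simp [hp, hq]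
  | mul_X p i hp => simp [hp]

theorem DS_eq_divSymm {K : Type*} [Field K] {m : ℕ} (E : Finset (Fin m × Fin m))
    (f : MvPolynomial (Fin m) K) :
    DS E f = divSymm E (map (algebraMap K (FractionRing (MvPolynomial (Fin m) K))) f)
      (fun i => algebraMap (MvPolynomial (Fin m) K) (FractionRing (MvPolynomial (Fin m) K))
        (X i)) := by
  refine sum_congr rfl fun π _ => ?_
  rw [algebraMap_rename_eq_eval_map, edgeQuot]
  simp [Function.comp_def]

/-- for the path `G` on `x_0, …, x_n`, `Φ = DS_G`, and
`y_i = x_0 + ⋯ + x_i`, one has `Φ(y_0 · y_1 · ⋯ · y_{n−1}) = n!`. -/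
theorem path_product_y_eq_factorial {K : Type*} [Field K] [CharZero K] (n : ℕ) :
    DS (pathEdges n) (∏ k : Fin n, pathY n K k.castSucc) =
      (n.factorial : FractionRing (MvPolynomial (Fin (n + 1)) K)) := by
  have hz : Function.Injective fun i : Fin (n + 1) =>
      algebraMap (MvPolynomial (Fin (n + 1)) K) (FractionRing (MvPolynomial (Fin (n + 1)) K))
        (X i) :=
    (IsFractionRing.injective _ _).comp X_injective
  rw [DS_eq_divSymm]
  simpa [pathY] using divSymm_pathEdges_prod_pathY_eq_factorial n hz
end

section
/- (Maximum-principle uniqueness) Let n ≥ 1 and let Q be a real-valued function on the set of (n+1)-tuples (c_0, ..., c_n) of nonnegative integers with Σ c_i = n, indices taken modulo n+1. Suppose that: (i) Q(c) = 0 whenever (c_0, ..., c_n) is a cyclic shift of (1, 1, ..., 1, 0); and (ii) for every tuple c and every index k with c_k ≥ 2, 2·Q(c_0, ..., c_n) = Q(c with c_{k−1} increased by 1 and c_k decreased by 1) + Q(c with c_k decreased by 1 and c_{k+1} increased by 1). Then Q is identically zero. -/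
/-!
Discrete maximum principle. Let `M` be the maximum of `Q` over all configurations. If `c` is a
maximiser and `c k ≥ 2`, the mean value identity at `(c, k)` forces both neighbours, in particular
`c` with one coin moved from `k` to `k + 1`, to be maximisers too. Walking a surplus coin to the
right in this way, it eventually lands on an empty vertex (there is one, as `n` coins sit on
`n + 1` vertices) and the excess `∑ (c j - 1)` drops. Hence some maximiser has no vertex with two
coins, i.e. is a rotation of `(1, …, 1, 0)`, and `M = 0`. Applied to `-Q` this gives `Q = 0`.
-/

open Finset

namespace CoinConfig

section General

variable {ι : Type*}

section Move

variable [DecidableEq ι] {c : ι → ℕ} {i j : ι}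

def moveCoin (c : ι → ℕ) (i j : ι) : ι → ℕ :=
  fun l => if l = i then c i - 1 else if l = j then c l + 1 else c l

@[simp]
lemma moveCoin_apply_source : moveCoin c i j i = c i - 1 := by
  simp [moveCoin]

lemma moveCoin_apply_target (hij : i ≠ j) : moveCoin c i j j = c j + 1 := by
  simp [moveCoin, hij.symm]

lemma moveCoin_apply_of_ne {l : ι} (hi : l ≠ i) (hj : l ≠ j) : moveCoin c i j l = c l := by
  simp [moveCoin, hi, hj]

end Move

variable [Fintype ι]

def excess (c : ι → ℕ) : ℕ := ∑ j, (c j - 1)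

lemma excess_eq_zero_iff {c : ι → ℕ} : excess c = 0 ↔ ∀ j, c j ≤ 1 := by
  simp [excess, sum_eq_zero_iff, Nat.sub_eq_zero_iff_le]

lemma exists_eq_zero_of_sum_lt_card {c : ι → ℕ} (hc : ∑ j, c j < Fintype.card ι) :
    ∃ j, c j = 0 := by
  by_contra! h
  have := card_nsmul_le_sum univ c 1 fun j _ => Nat.one_le_iff_ne_zero.mpr (h j)
  rw [card_univ, smul_eq_mul, mul_one] at this
  exact hc.not_ge this

variable [DecidableEq ι]

lemma sum_add_eq_sum_add_of_eq_of_ne {M : Type*} [AddCommMonoid M] {f g : ι → M} {i j : ι}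
    (hij : i ≠ j) (h : ∀ l, l ≠ i → l ≠ j → f l = g l) :
    ∑ l, f l + (g i + g j) = ∑ l, g l + (f i + f j) := by
  have hcompl : ∑ l ∈ {i, j}ᶜ, f l = ∑ l ∈ {i, j}ᶜ, g l :=
    sum_congr rfl fun l hl => by
      simp only [mem_compl, mem_insert, mem_singleton, not_or] at hl
      exact h l hl.1 hl.2
  rw [← sum_add_sum_compl {i, j} f, ← sum_add_sum_compl {i, j} g, sum_pair hij, sum_pair hij,
    hcompl]
  abel

variable {c : ι → ℕ} {i j : ι}

lemma sum_moveCoin (hij : i ≠ j) (hi : 1 ≤ c i) : ∑ l, moveCoin c i j l = ∑ l, c l := by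
  have := sum_add_eq_sum_add_of_eq_of_ne (f := moveCoin c i j) (g := c) hij
    fun l hli hlj => moveCoin_apply_of_ne hli hlj
  rw [moveCoin_apply_source, moveCoin_apply_target hij] at this
  omega

lemma excess_moveCoin_add (hij : i ≠ j) :
    excess (moveCoin c i j) + (c i - 1 + (c j - 1)) = excess c + (c i - 1 - 1 + c j) := by
  have := sum_add_eq_sum_add_of_eq_of_ne (f := fun l => moveCoin c i j l - 1)
    (g := fun l => c l - 1) hij fun l hli hlj => by simp only [moveCoin_apply_of_ne hli hlj]
  unfold excess
  simpa only [moveCoin_apply_source, moveCoin_apply_target hij, Nat.add_sub_cancel] using this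

lemma excess_moveCoin_lt (hij : i ≠ j) (hi : 2 ≤ c i) (hj : c j = 0) :
    excess (moveCoin c i j) < excess c := by
  have := excess_moveCoin_add (c := c) hij
  omega

lemma excess_moveCoin_eq (hij : i ≠ j) (hi : 2 ≤ c i) (hj : c j ≠ 0) :
    excess (moveCoin c i j) = excess c := by
  have := excess_moveCoin_add (c := c) hij
  omega

lemma exists_eq_ite_of_le_one {n : ℕ} (hι : Fintype.card ι = n + 1) (hc : ∑ j, c j = n)
    (hle : ∀ j, c j ≤ 1) : ∃ z, c = fun j => if j = z then 0 else 1 := by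
  have hones : #{j | c j = 1} = n := by
    rw [← hc, card_filter]
    exact sum_congr rfl fun j _ => by have := hle j; split_ifs <;> omega
  have hzeros : #{j | ¬c j = 1} = 1 := by
    have := card_filter_add_card_filter_not (s := univ) (fun j => c j = 1)
    rw [card_univ, hι, hones] at this
    omega
  obtain ⟨z, hz⟩ := card_eq_one.mp hzeros
  refine ⟨z, funext fun j => ?_⟩
  have hj : c j ≠ 1 ↔ j = z := by simpa using congrArg (j ∈ ·) hz
  have := hle j
  split_ifs with h
  · have := hj.mpr h
    omega
  · have := mt hj.mp h
    omega

end General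

section Cycle

variable {n : ℕ}

lemma exists_eq_rotation_of_excess_eq_zero {c : Fin (n + 1) → ℕ} (hc : ∑ j, c j = n)
    (h0 : excess c = 0) :
    ∃ i : Fin (n + 1), c = fun j => if j + i = Fin.last n then 0 else 1 := by
  obtain ⟨z, rfl⟩ := exists_eq_ite_of_le_one (Fintype.card_fin _) hc (excess_eq_zero_iff.mp h0)
  refine ⟨Fin.last n - z, funext fun j => if_congr ?_ rfl rfl⟩
  rw [← eq_sub_iff_add_eq, sub_sub_cancel]

lemma add_one_ne_self_of_two_le {c : Fin (n + 1) → ℕ} (hc : ∑ j, c j = n) {k : Fin (n + 1)}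
    (hk : 2 ≤ c k) : k + 1 ≠ k ∧ k - 1 ≠ k := by
  have : c k ≤ n := hc ▸ single_le_sum (fun j _ => Nat.zero_le (c j)) (mem_univ k)
  have hn : (1 : Fin (n + 1)) ≠ 0 := by
    rw [Ne, Fin.one_eq_zero_iff]
    omega
  simp [add_eq_left, sub_eq_self, hn]

def IsCoinHarmonic (n : ℕ) (Q : (Fin (n + 1) → ℕ) → ℝ) : Prop :=
  ∀ c : Fin (n + 1) → ℕ, ∑ j, c j = n → ∀ k, 2 ≤ c k →
    2 * Q c = Q (moveCoin c k (k - 1)) + Q (moveCoin c k (k + 1))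

lemma IsCoinHarmonic.neg {Q : (Fin (n + 1) → ℕ) → ℝ} (hQ : IsCoinHarmonic n Q) :
    IsCoinHarmonic n (-Q) := fun c hc k hk => by
  simp only [Pi.neg_apply]
  linarith [hQ c hc k hk]

end Cycle

section Maximum

variable {n : ℕ} {Q : (Fin (n + 1) → ℕ) → ℝ} {M : ℝ}
  (hQ : IsCoinHarmonic n Q) (hM : ∀ c : Fin (n + 1) → ℕ, ∑ j, c j = n → Q c ≤ M)
include hQ hM

open Fin.NatCast

lemma IsCoinHarmonic.moveCoin_add_one_of_max {c : Fin (n + 1) → ℕ} (hc : ∑ j, c j = n)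
    (hQc : Q c = M) {k : Fin (n + 1)} (hk : 2 ≤ c k) :
    ∑ j, moveCoin c k (k + 1) j = n ∧ Q (moveCoin c k (k + 1)) = M := by
  obtain ⟨hsucc, hpred⟩ := add_one_ne_self_of_two_le hc hk
  have hR := (sum_moveCoin hsucc.symm (by omega)).trans hc
  have hL := (sum_moveCoin hpred.symm (by omega)).trans hc
  refine ⟨hR, ?_⟩
  linarith [hQ c hc k hk, hM _ hR, hM _ hL]

lemma IsCoinHarmonic.exists_max_excess_lt_of_eq_zero (d : ℕ) {c : Fin (n + 1) → ℕ}
    (hc : ∑ j, c j = n) (hQc : Q c = M) {k : Fin (n + 1)} (hk : 2 ≤ c k) (hd : c (k + d) = 0) :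
    ∃ c' : Fin (n + 1) → ℕ, ∑ j, c' j = n ∧ Q c' = M ∧ excess c' < excess c := by
  induction d generalizing c k with
  | zero => simp only [Nat.cast_zero, add_zero] at hd; omega
  | succ d ih =>
    obtain ⟨hc', hQc'⟩ := hQ.moveCoin_add_one_of_max hM hc hQc hk
    have hne : k ≠ k + 1 := (add_one_ne_self_of_two_le hc hk).1.symm
    by_cases hnext : c (k + 1) = 0
    · exact ⟨_, hc', hQc', excess_moveCoin_lt hne hk hnext⟩
    -- the surplus coin now sits on `k + 1`, one step closer to the empty vertex
    have hk' : 2 ≤ moveCoin c k (k + 1) (k + 1) := by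
      rw [moveCoin_apply_target hne]
      omega
    have hd' : moveCoin c k (k + 1) (k + 1 + d) = 0 := by
      have hpos : k + 1 + d = k + (d + 1 : ℕ) := by
        rw [Nat.cast_succ, add_right_comm, add_assoc]
      have hne_k : k + (d + 1 : ℕ) ≠ k := fun h => by rw [h] at hd; omega
      have hne_k1 : k + (d + 1 : ℕ) ≠ k + 1 := fun h => hnext (h ▸ hd)
      rw [hpos, moveCoin_apply_of_ne hne_k hne_k1, hd]
    obtain ⟨c'', hc'', hQc'', hlt⟩ := ih hc' hQc' hk' hd'
    exact ⟨c'', hc'', hQc'', hlt.trans_eq (excess_moveCoin_eq hne hk hnext)⟩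

lemma IsCoinHarmonic.exists_max_excess_lt {c : Fin (n + 1) → ℕ} (hc : ∑ j, c j = n)
    (hQc : Q c = M) (h0 : excess c ≠ 0) :
    ∃ c' : Fin (n + 1) → ℕ, ∑ j, c' j = n ∧ Q c' = M ∧ excess c' < excess c := by
  obtain ⟨k, hk⟩ : ∃ k, 2 ≤ c k := by
    by_contra! h
    exact h0 (excess_eq_zero_iff.mpr fun j => Nat.le_of_lt_succ (h j))
  obtain ⟨z, hz⟩ := exists_eq_zero_of_sum_lt_card (c := c) (by simp [hc])
  refine hQ.exists_max_excess_lt_of_eq_zero hM (z - k).val hc hQc hk ?_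
  rwa [Fin.cast_val_eq_self, add_sub_cancel]

lemma IsCoinHarmonic.max_eq_zero
    (h1 : ∀ i : Fin (n + 1), Q (fun j => if j + i = Fin.last n then 0 else 1) = 0)
    {c : Fin (n + 1) → ℕ} (hc : ∑ j, c j = n) (hQc : Q c = M) : M = 0 := by
  induction hE : excess c using Nat.strong_induction_on generalizing c with
  | _ e ih =>
    by_cases h0 : excess c = 0
    · obtain ⟨i, rfl⟩ := exists_eq_rotation_of_excess_eq_zero hc h0
      rw [← hQc, h1]
    · obtain ⟨c', hc', hQc', hlt⟩ := hQ.exists_max_excess_lt hM hc hQc h0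
      exact ih _ (hE ▸ hlt) hc' hQc' rfl

end Maximum

lemma IsCoinHarmonic.le_zero {n : ℕ} {Q : (Fin (n + 1) → ℕ) → ℝ} (hQ : IsCoinHarmonic n Q)
    (h1 : ∀ i : Fin (n + 1), Q (fun j => if j + i = Fin.last n then 0 else 1) = 0)
    {c : Fin (n + 1) → ℕ} (hc : ∑ j, c j = n) : Q c ≤ 0 := by
  obtain ⟨cmax, hcmax, hmax⟩ := exists_max_image (Nat.antidiagonalTuple (n + 1) n) Q
    ⟨c, Nat.mem_antidiagonalTuple.mpr hc⟩
  have hM : ∀ c' : Fin (n + 1) → ℕ, ∑ j, c' j = n → Q c' ≤ Q cmax :=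
    fun c' hc' => hmax c' (Nat.mem_antidiagonalTuple.mpr hc')
  rw [← hQ.max_eq_zero hM h1 (Nat.mem_antidiagonalTuple.mp hcmax) rfl]
  exact hM c hc

end CoinConfig

open CoinConfig in
theorem maximum_principle_uniqueness_general (n : ℕ)
    (Q : (Fin (n + 1) → ℕ) → ℝ)
    (h1 : ∀ i : Fin (n + 1),
      Q (fun j => if j + i = Fin.last n then 0 else 1) = 0)
    (h2 : ∀ c : Fin (n + 1) → ℕ, (∑ j, c j) = n → ∀ k : Fin (n + 1), 2 ≤ c k →
      2 * Q c =
        Q (fun j => if j = k then c k - 1 else if j = k - 1 then c j + 1 else c j) +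
        Q (fun j => if j = k then c k - 1 else if j = k + 1 then c j + 1 else c j)) :
    ∀ c : Fin (n + 1) → ℕ, (∑ j, c j) = n → Q c = 0 := by
  have hQ : IsCoinHarmonic n Q := h2
  intro c hc
  have hneg : -Q c ≤ 0 := hQ.neg.le_zero (fun i => by simp [h1 i]) hc
  linarith [hQ.le_zero h1 hc]

/-- maximum-principle uniqueness: let `n ≥ 1` and let `Q` be a real-valued
function on the `(n+1)`-tuples `(c_0, …, c_n)` of nonnegative integers with `Σ c_i = n`
(indices modulo `n + 1`).  If `Q` vanishes on every cyclic shift of `(1, 1, …, 1, 0)`,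
and for every tuple `c` and index `k` with `c_k ≥ 2` one has
`2·Q(c) = Q(c_{k−1} += 1, c_k −= 1) + Q(c_k −= 1, c_{k+1} += 1)`,
then `Q` is identically zero. -/
theorem maximum_principle_uniqueness (n : ℕ) (hn : 1 ≤ n)
    (Q : (Fin (n + 1) → ℕ) → ℝ)
    (h1 : ∀ i : Fin (n + 1),
      Q (fun j => if j + i = Fin.last n then 0 else 1) = 0)
    (h2 : ∀ c : Fin (n + 1) → ℕ, (∑ j, c j) = n → ∀ k : Fin (n + 1), 2 ≤ c k →
      2 * Q c =
        Q (fun j => if j = k then c k - 1 else if j = k - 1 then c j + 1 else c j) +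
        Q (fun j => if j = k then c k - 1 else if j = k + 1 then c j + 1 else c j)) :
    ∀ c : Fin (n + 1) → ℕ, (∑ j, c j) = n → Q c = 0 :=
  maximum_principle_uniqueness_general n Q h1 h2
end
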